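/- arXiv:1206.1672 — 10 statements merged into one kernel-verified Lean document; each statement's English description precedes it below -/
import Mathlib

section
/- Let S, A¹, A² be finite nonempty sets, C¹, C² : S × A¹ × A² → ℝ cost functions, d¹ᵏ : S × A¹ → ℝ (k = 1,…,n₁) subscription costs with bounds ξ¹ ∈ ℝ^{n₁}, and D²ˡ : S × A¹ × A² → ℝ (l = 1,…,n₂) costs with bounds ξ² ∈ ℝ^{n₂}, and let p be a transition kernel on S controlled by A². Then for every feasible point η = (v, u, z, f, x, δ¹, δ²) of the mathematical program [MP1] — i.e., satisfying: (i) v + u(s) ≤ ∑_{a¹} f(s,a¹)·C²(s,a¹,a²) + ∑_l δ²_l·∑_{a¹} f(s,a¹)·D²ˡ(s,a¹,a²) + ∑_{s'} p(s'|s,a²)·u(s') for all (s,a²); (ii) z(s) ≤ ∑_{a²} C¹(s,a¹,a²)·x(s,a²) + ∑_k δ¹_k·d¹ᵏ(s,a¹) for all (s,a¹); (iii) ∑_{(s,a²)} (δ(s,s') − p(s'|s,a²))·x(s,a²) = 0 for all s'; (iv) ∑_{(s,a²)} x(s,a²) = 1; (v) ∑_{(s,a¹)} d¹ᵏ(s,a¹)·f(s,a¹)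 ≤ ξ¹_k for all k; (vi) ∑_{(s,a¹,a²)} f(s,a¹)·D²ˡ(s,a¹,a²)·x(s,a²) ≤ ξ²_l for all l; (vii) ∑_{a¹} f(s,a¹) = 1 for all s; (viii)–(xi) f, x, δ¹, δ² ≥ 0 — the objective Φ(η) = (∑_{(s,a¹,a²)} f(s,a¹)·C¹(s,a¹,a²)·x(s,a²) − ∑_s z(s) + (δ¹)ᵀξ¹) + (∑_{(s,a¹,a²)} f(s,a¹)·C²(s,a¹,a²)·x(s,a²) − v + (δ²)ᵀξ²) is nonnegative. -/
theorem MP1_objective_nonneg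
    (S A1 A2 : Type) [Fintype S] [DecidableEq S] [Fintype A1] [Fintype A2]
    [Nonempty S] [Nonempty A1] [Nonempty A2]
    (n1 n2 : ℕ)
    (C1 C2 : S → A1 → A2 → ℝ)
    (d1 : Fin n1 → S → A1 → ℝ) (ξ1 : Fin n1 → ℝ)
    (D2 : Fin n2 → S → A1 → A2 → ℝ) (ξ2 : Fin n2 → ℝ)
    (p : S → A2 → S → ℝ)
    (hp0 : ∀ s a s', 0 ≤ p s a s')
    (hp1 : ∀ s a, ∑ s', p s a s' = 1)
    (v : ℝ) (u z : S → ℝ) (f : S → A1 → ℝ) (x : S → A2 → ℝ)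
    (δ1 : Fin n1 → ℝ) (δ2 : Fin n2 → ℝ)
    (h1 : ∀ s a2, v + u s ≤ (∑ a1, f s a1 * C2 s a1 a2)
        + (∑ l, δ2 l * ∑ a1, f s a1 * D2 l s a1 a2)
        + ∑ s', p s a2 s' * u s')
    (h2 : ∀ s a1, z s ≤ (∑ a2, C1 s a1 a2 * x s a2) + ∑ k, δ1 k * d1 k s a1)
    (h3 : ∀ s', ∑ s, ∑ a2,
      ((if s = s' then (1 : ℝ) else 0) - p s a2 s') * x s a2 = 0)
    (h4 : ∑ s, ∑ a2, x s a2 = 1)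
    (h5 : ∀ k, ∑ s, ∑ a1, d1 k s a1 * f s a1 ≤ ξ1 k)
    (h6 : ∀ l, ∑ s, ∑ a1, ∑ a2, f s a1 * D2 l s a1 a2 * x s a2 ≤ ξ2 l)
    (h7 : ∀ s, ∑ a1, f s a1 = 1)
    (h8 : ∀ s a1, 0 ≤ f s a1)
    (h9 : ∀ s a2, 0 ≤ x s a2)
    (h10 : ∀ k, 0 ≤ δ1 k)
    (h11 : ∀ l, 0 ≤ δ2 l) :
    0 ≤ ((∑ s, ∑ a1, ∑ a2, f s a1 * C1 s a1 a2 * x s a2)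
          - (∑ s, z s) + ∑ k, δ1 k * ξ1 k)
      + ((∑ s, ∑ a1, ∑ a2, f s a1 * C2 s a1 a2 * x s a2)
          - v + ∑ l, δ2 l * ξ2 l) := by
  -- ===== Term 1 =====
  have hz : ∑ s, z s ≤ (∑ s, ∑ a1, ∑ a2, f s a1 * C1 s a1 a2 * x s a2)
      + ∑ k, δ1 k * ξ1 k := by
    have step : ∀ s : S, z s ≤ (∑ a1, ∑ a2, f s a1 * C1 s a1 a2 * x s a2)
        + ∑ a1, f s a1 * ∑ k, δ1 k * d1 k s a1 := by
      intro s
      have hzs : z s = ∑ a1, f s a1 * z s := by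
        rw [← Finset.sum_mul, h7 s, one_mul]
      rw [hzs, ← Finset.sum_add_distrib]
      apply Finset.sum_le_sum
      intro a1 _
      calc f s a1 * z s
          ≤ f s a1 * ((∑ a2, C1 s a1 a2 * x s a2) + ∑ k, δ1 k * d1 k s a1) :=
            mul_le_mul_of_nonneg_left (h2 s a1) (h8 s a1)
        _ = (∑ a2, f s a1 * C1 s a1 a2 * x s a2) + f s a1 * ∑ k, δ1 k * d1 k s a1 := by
            rw [mul_add, Finset.mul_sum]; ring_nf
    have hswap : ∑ s, ∑ a1, f s a1 * ∑ k, δ1 k * d1 k s a1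
        = ∑ k, δ1 k * ∑ s, ∑ a1, d1 k s a1 * f s a1 := by
      calc ∑ s, ∑ a1, f s a1 * ∑ k, δ1 k * d1 k s a1
          = ∑ s, ∑ a1, ∑ k, δ1 k * (d1 k s a1 * f s a1) := by
            refine Finset.sum_congr rfl fun s _ => ?_
            refine Finset.sum_congr rfl fun a1 _ => ?_
            rw [Finset.mul_sum]
            refine Finset.sum_congr rfl fun k _ => ?_
            ring
        _ = ∑ s, ∑ k, ∑ a1, δ1 k * (d1 k s a1 * f s a1) := by
            refine Finset.sum_congr rfl fun s _ => ?_
            exact Finset.sum_comm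
        _ = ∑ k, ∑ s, ∑ a1, δ1 k * (d1 k s a1 * f s a1) := Finset.sum_comm
        _ = ∑ k, δ1 k * ∑ s, ∑ a1, d1 k s a1 * f s a1 := by
            refine Finset.sum_congr rfl fun k _ => ?_
            rw [Finset.mul_sum]
            refine Finset.sum_congr rfl fun s _ => ?_
            rw [Finset.mul_sum]
    calc ∑ s, z s
        ≤ ∑ s, ((∑ a1, ∑ a2, f s a1 * C1 s a1 a2 * x s a2)
            + ∑ a1, f s a1 * ∑ k, δ1 k * d1 k s a1) :=
          Finset.sum_le_sum (fun s _ => step s)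
      _ = (∑ s, ∑ a1, ∑ a2, f s a1 * C1 s a1 a2 * x s a2)
            + ∑ s, ∑ a1, f s a1 * ∑ k, δ1 k * d1 k s a1 := Finset.sum_add_distrib
      _ ≤ (∑ s, ∑ a1, ∑ a2, f s a1 * C1 s a1 a2 * x s a2) + ∑ k, δ1 k * ξ1 k := by
          rw [hswap]
          have : ∑ k, δ1 k * ∑ s, ∑ a1, d1 k s a1 * f s a1 ≤ ∑ k, δ1 k * ξ1 k :=
            Finset.sum_le_sum (fun k _ => mul_le_mul_of_nonneg_left (h5 k) (h10 k))
          linarith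
  -- ===== Term 2 =====
  have hcancel : ∑ s, ∑ a2, x s a2 * ∑ s', p s a2 s' * u s'
      = ∑ s, (∑ a2, x s a2) * u s := by
    have key : ∀ s' : S, ∑ s, ∑ a2, p s a2 s' * x s a2 = ∑ a2, x s' a2 := by
      intro s'
      have h3' := h3 s'
      have expand : ∑ s, ∑ a2, ((if s = s' then (1:ℝ) else 0) - p s a2 s') * x s a2
          = (∑ s, ∑ a2, (if s = s' then (1:ℝ) else 0) * x s a2)
            - ∑ s, ∑ a2, p s a2 s' * x s a2 := by
        rw [← Finset.sum_sub_distrib]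
        refine Finset.sum_congr rfl fun s _ => ?_
        rw [← Finset.sum_sub_distrib]
        refine Finset.sum_congr rfl fun a2 _ => ?_
        ring
      have hif : ∑ s, ∑ a2, (if s = s' then (1:ℝ) else 0) * x s a2 = ∑ a2, x s' a2 := by
        rw [Finset.sum_eq_single s']
        · simp
        · intro b _ hb; simp [hb]
        · intro h; exact absurd (Finset.mem_univ s') h
      rw [expand, hif] at h3'
      linarith
    calc ∑ s, ∑ a2, x s a2 * ∑ s', p s a2 s' * u s'
        = ∑ s, ∑ a2, ∑ s', u s' * (p s a2 s' * x s a2) := by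
          refine Finset.sum_congr rfl fun s _ => ?_
          refine Finset.sum_congr rfl fun a2 _ => ?_
          rw [Finset.mul_sum]
          refine Finset.sum_congr rfl fun s' _ => ?_
          ring
      _ = ∑ s, ∑ s', ∑ a2, u s' * (p s a2 s' * x s a2) := by
          refine Finset.sum_congr rfl fun s _ => ?_
          exact Finset.sum_comm
      _ = ∑ s', ∑ s, ∑ a2, u s' * (p s a2 s' * x s a2) := Finset.sum_comm
      _ = ∑ s', u s' * ∑ s, ∑ a2, p s a2 s' * x s a2 := by
          refine Finset.sum_congr rfl fun s' _ => ?_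
          rw [Finset.mul_sum]
          refine Finset.sum_congr rfl fun s _ => ?_
          rw [Finset.mul_sum]
      _ = ∑ s, (∑ a2, x s a2) * u s := by
          refine Finset.sum_congr rfl fun s' _ => ?_
          rw [key s']; ring
  have hC2 : ∑ s, ∑ a2, x s a2 * ∑ a1, f s a1 * C2 s a1 a2
      = ∑ s, ∑ a1, ∑ a2, f s a1 * C2 s a1 a2 * x s a2 := by
    refine Finset.sum_congr rfl fun s _ => ?_
    calc ∑ a2, x s a2 * ∑ a1, f s a1 * C2 s a1 a2
        = ∑ a2, ∑ a1, f s a1 * C2 s a1 a2 * x s a2 := by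
          refine Finset.sum_congr rfl fun a2 _ => ?_
          rw [Finset.mul_sum]
          refine Finset.sum_congr rfl fun a1 _ => ?_
          ring
      _ = ∑ a1, ∑ a2, f s a1 * C2 s a1 a2 * x s a2 := Finset.sum_comm
  have hD : ∑ s, ∑ a2, x s a2 * ∑ l, δ2 l * ∑ a1, f s a1 * D2 l s a1 a2
      = ∑ l, δ2 l * ∑ s, ∑ a1, ∑ a2, f s a1 * D2 l s a1 a2 * x s a2 := by
    calc ∑ s, ∑ a2, x s a2 * ∑ l, δ2 l * ∑ a1, f s a1 * D2 l s a1 a2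
        = ∑ s, ∑ a2, ∑ l, δ2 l * ∑ a1, f s a1 * D2 l s a1 a2 * x s a2 := by
          refine Finset.sum_congr rfl fun s _ => ?_
          refine Finset.sum_congr rfl fun a2 _ => ?_
          rw [Finset.mul_sum]
          refine Finset.sum_congr rfl fun l _ => ?_
          rw [Finset.mul_sum, Finset.mul_sum, Finset.mul_sum]
          refine Finset.sum_congr rfl fun a1 _ => ?_
          ring
      _ = ∑ s, ∑ l, ∑ a2, δ2 l * ∑ a1, f s a1 * D2 l s a1 a2 * x s a2 := by
          refine Finset.sum_congr rfl fun s _ => ?_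
          exact Finset.sum_comm
      _ = ∑ l, ∑ s, ∑ a2, δ2 l * ∑ a1, f s a1 * D2 l s a1 a2 * x s a2 := Finset.sum_comm
      _ = ∑ l, δ2 l * ∑ s, ∑ a1, ∑ a2, f s a1 * D2 l s a1 a2 * x s a2 := by
          refine Finset.sum_congr rfl fun l _ => ?_
          rw [Finset.mul_sum]
          refine Finset.sum_congr rfl fun s _ => ?_
          calc ∑ a2, δ2 l * ∑ a1, f s a1 * D2 l s a1 a2 * x s a2
              = δ2 l * ∑ a2, ∑ a1, f s a1 * D2 l s a1 a2 * x s a2 :=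
                (Finset.mul_sum _ _ _).symm
            _ = δ2 l * ∑ a1, ∑ a2, f s a1 * D2 l s a1 a2 * x s a2 := by
                rw [Finset.sum_comm]
  have hv : v ≤ (∑ s, ∑ a1, ∑ a2, f s a1 * C2 s a1 a2 * x s a2)
      + ∑ l, δ2 l * ξ2 l := by
    have main : ∑ s, ∑ a2, x s a2 * (v + u s)
        ≤ ∑ s, ∑ a2, x s a2 * ((∑ a1, f s a1 * C2 s a1 a2)
            + (∑ l, δ2 l * ∑ a1, f s a1 * D2 l s a1 a2)
            + ∑ s', p s a2 s' * u s') := by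
      apply Finset.sum_le_sum; intro s _
      apply Finset.sum_le_sum; intro a2 _
      exact mul_le_mul_of_nonneg_left (h1 s a2) (h9 s a2)
    have lhs_eq : ∑ s, ∑ a2, x s a2 * (v + u s)
        = v + ∑ s, (∑ a2, x s a2) * u s := by
      have e : ∑ s, ∑ a2, x s a2 * (v + u s)
          = (∑ s, ∑ a2, x s a2 * v) + ∑ s, ∑ a2, x s a2 * u s := by
        rw [← Finset.sum_add_distrib]
        refine Finset.sum_congr rfl fun s _ => ?_
        rw [← Finset.sum_add_distrib]
        refine Finset.sum_congr rfl fun a2 _ => ?_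
        ring
      rw [e]
      congr 1
      · simp_rw [← Finset.sum_mul]
        rw [h4, one_mul]
      · refine Finset.sum_congr rfl fun s _ => ?_
        exact (Finset.sum_mul _ _ _).symm
    have rhs_eq : ∑ s, ∑ a2, x s a2 * ((∑ a1, f s a1 * C2 s a1 a2)
            + (∑ l, δ2 l * ∑ a1, f s a1 * D2 l s a1 a2)
            + ∑ s', p s a2 s' * u s')
        = (∑ s, ∑ a1, ∑ a2, f s a1 * C2 s a1 a2 * x s a2)
          + (∑ l, δ2 l * ∑ s, ∑ a1, ∑ a2, f s a1 * D2 l s a1 a2 * x s a2)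
          + ∑ s, (∑ a2, x s a2) * u s := by
      have split : ∑ s, ∑ a2, x s a2 * ((∑ a1, f s a1 * C2 s a1 a2)
            + (∑ l, δ2 l * ∑ a1, f s a1 * D2 l s a1 a2)
            + ∑ s', p s a2 s' * u s')
          = (∑ s, ∑ a2, x s a2 * ∑ a1, f s a1 * C2 s a1 a2)
            + (∑ s, ∑ a2, x s a2 * ∑ l, δ2 l * ∑ a1, f s a1 * D2 l s a1 a2)
            + ∑ s, ∑ a2, x s a2 * ∑ s', p s a2 s' * u s' := by
        rw [← Finset.sum_add_distrib, ← Finset.sum_add_distrib]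
        refine Finset.sum_congr rfl fun s _ => ?_
        rw [← Finset.sum_add_distrib, ← Finset.sum_add_distrib]
        refine Finset.sum_congr rfl fun a2 _ => ?_
        ring
      rw [split, hC2, hD, hcancel]
    have hfinal : v + ∑ s, (∑ a2, x s a2) * u s
        ≤ (∑ s, ∑ a1, ∑ a2, f s a1 * C2 s a1 a2 * x s a2)
          + (∑ l, δ2 l * ∑ s, ∑ a1, ∑ a2, f s a1 * D2 l s a1 a2 * x s a2)
          + ∑ s, (∑ a2, x s a2) * u s := by
      rw [← lhs_eq, ← rhs_eq]; exact main
    have hξ : ∑ l, δ2 l * ∑ s, ∑ a1, ∑ a2, f s a1 * D2 l s a1 a2 * x s a2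
        ≤ ∑ l, δ2 l * ξ2 l :=
      Finset.sum_le_sum (fun l _ => mul_le_mul_of_nonneg_left (h6 l) (h11 l))
    linarith
  linarith
end

section
/- With the setup of [MP1]: if η* = (v*, u*, z*, f*, x*, δ¹*, δ²*) is feasible for [MP1] with Φ(η*) = 0, then for every f : S × A¹ → ℝ with f ≥ 0, ∑_{a¹} f(s,a¹) = 1 for all s, and ∑_{(s,a¹)} d¹ᵏ(s,a¹)·f(s,a¹) ≤ ξ¹_k for all k, one has ∑_{(s,a¹,a²)} f*(s,a¹)·C¹(s,a¹,a²)·x*(s,a²) ≤ ∑_{(s,a¹,a²)} f(s,a¹)·C¹(s,a¹,a²)·x*(s,a²). -/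
/-!
Both halves of `Φ` are linear-programming duality gaps. The second is nonnegative: integrating
player 2's average-cost inequalities against the stationary distribution `x*` gives
`v* ≤ f* C² x* + δ²*·ξ²`. So `Φ(η*) = 0` yields `f* C¹ x* ≤ ∑ z* - δ¹*·ξ¹`, and pricing player 1's
constraints `z* s ≤ (C¹ x*)(s, a¹) + δ¹*·d¹(s, a¹)` against a subscription-feasible `f` bounds
the right-hand side by `f C¹ x*`.
-/

open Finset

section Duality

variable {S A ι : Type*} [Fintype S] [Fintype A] [Fintype ι]

lemma sum_sum_weighted_sum_mul {R : Type*} [CommSemiring R] (δ : ι → R) (w : ι → S → A → R)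
    (y : S → A → R) :
    ∑ s, ∑ a, (∑ k, δ k * w k s a) * y s a = ∑ k, δ k * ∑ s, ∑ a, w k s a * y s a := by
  simp only [sum_mul, mul_sum, mul_assoc]
  simp_rw [sum_comm (s := (univ : Finset A)) (t := (univ : Finset ι))]
  exact sum_comm

lemma le_sum_mul_of_le {α : Type*} [Fintype α] {g w : α → ℝ} {z : ℝ}
    (hg0 : ∀ a, 0 ≤ g a) (hg1 : ∑ a, g a = 1) (hz : ∀ a, z ≤ w a) :
    z ≤ ∑ a, g a * w a :=
  calc z = ∑ a, g a * z := by rw [← sum_mul, hg1, one_mul]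
    _ ≤ ∑ a, g a * w a := sum_le_sum fun a _ => mul_le_mul_of_nonneg_left (hz a) (hg0 a)

lemma sum_le_sum_cost_add_of_dual_feasible {c : S → A → ℝ} {d : ι → S → A → ℝ}
    {ξ δ : ι → ℝ} {z : S → ℝ} {g : S → A → ℝ}
    (hz : ∀ s a, z s ≤ c s a + ∑ k, δ k * d k s a) (hδ : ∀ k, 0 ≤ δ k)
    (hg0 : ∀ s a, 0 ≤ g s a) (hg1 : ∀ s, ∑ a, g s a = 1)
    (hgd : ∀ k, ∑ s, ∑ a, d k s a * g s a ≤ ξ k) :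
    ∑ s, z s ≤ ∑ s, ∑ a, g s a * c s a + ∑ k, δ k * ξ k :=
  calc ∑ s, z s ≤ ∑ s, ∑ a, (c s a + ∑ k, δ k * d k s a) * g s a :=
        sum_le_sum fun s _ => by
          simpa only [mul_comm (g s _)] using le_sum_mul_of_le (hg0 s) (hg1 s) (hz s)
    _ = ∑ s, ∑ a, g s a * c s a + ∑ k, δ k * ∑ s, ∑ a, d k s a * g s a := by
        simp only [add_mul, sum_add_distrib, sum_sum_weighted_sum_mul, mul_comm (c _ _)]
    _ ≤ ∑ s, ∑ a, g s a * c s a + ∑ k, δ k * ξ k := by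
        gcongr with k
        · exact hδ k
        · exact hgd k

variable [DecidableEq S]

lemma sum_sum_expected_mul_eq_of_stationary {R : Type*} [CommRing R] {p : S → A → S → R}
    {x : S → A → R}
    (hx : ∀ s', ∑ s, ∑ a, ((if s = s' then (1 : R) else 0) - p s a s') * x s a = 0) (u : S → R) :
    ∑ s, ∑ a, (∑ s', p s a s' * u s') * x s a = ∑ s, ∑ a, u s * x s a := by
  have hbalance : ∀ s', ∑ a, x s' a = ∑ s, ∑ a, p s a s' * x s a := fun s' => by
    have h := hx s'
    simp only [sub_mul, sum_sub_distrib, ite_mul, one_mul, zero_mul, sub_eq_zero] at h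
    rw [sum_comm] at h
    simpa only [sum_ite_eq', mem_univ, if_true] using h
  calc ∑ s, ∑ a, (∑ s', p s a s' * u s') * x s a
      = ∑ s', u s' * ∑ s, ∑ a, p s a s' * x s a := by
        simp only [sum_mul, mul_sum]
        simp_rw [sum_comm (s := (univ : Finset A)) (t := (univ : Finset S))]
        rw [sum_comm]
        simp only [mul_comm (p _ _ _) (u _), mul_assoc]
    _ = ∑ s, ∑ a, u s * x s a := by simp only [← hbalance, mul_sum]

lemma le_sum_sum_mul_of_stationary {p : S → A → S → ℝ} {x : S → A → ℝ} {r : S → A → ℝ}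
    {v : ℝ} {u : S → ℝ}
    (hx : ∀ s', ∑ s, ∑ a, ((if s = s' then (1 : ℝ) else 0) - p s a s') * x s a = 0)
    (hx0 : ∀ s a, 0 ≤ x s a) (hx1 : ∑ s, ∑ a, x s a = 1)
    (hvu : ∀ s a, v + u s ≤ r s a + ∑ s', p s a s' * u s') :
    v ≤ ∑ s, ∑ a, r s a * x s a := by
  have hint : ∑ s, ∑ a, (v + u s) * x s a
      ≤ ∑ s, ∑ a, (r s a + ∑ s', p s a s' * u s') * x s a :=
    sum_le_sum fun s _ => sum_le_sum fun a _ => mul_le_mul_of_nonneg_right (hvu s a) (hx0 s a)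
  have hv : ∑ s, ∑ a, v * x s a = v := by simp only [← mul_sum, hx1, mul_one]
  simp only [add_mul, sum_add_distrib, sum_sum_expected_mul_eq_of_stationary hx, hv] at hint
  linarith

end Duality

lemma sum_sum_sum_mul_comm {S A B R : Type*} [Fintype S] [Fintype A] [Fintype B]
    [NonUnitalNonAssocSemiring R] (F : S → A → B → R) (x : S → B → R) :
    ∑ s, ∑ b, (∑ a, F s a b) * x s b = ∑ s, ∑ a, ∑ b, F s a b * x s b := by
  simp only [sum_mul]
  refine Finset.sum_congr rfl fun _ _ => ?_
  exact sum_comm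

theorem MP1_zero_objective_player1_best_response_general
    (S A1 A2 : Type) [Fintype S] [DecidableEq S] [Fintype A1] [Fintype A2]
    (n1 n2 : ℕ)
    (C1 C2 : S → A1 → A2 → ℝ)
    (d1 : Fin n1 → S → A1 → ℝ) (ξ1 : Fin n1 → ℝ)
    (D2 : Fin n2 → S → A1 → A2 → ℝ) (ξ2 : Fin n2 → ℝ)
    (p : S → A2 → S → ℝ)
    (v : ℝ) (u z : S → ℝ) (f : S → A1 → ℝ) (x : S → A2 → ℝ)
    (δ1 : Fin n1 → ℝ) (δ2 : Fin n2 → ℝ)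
    (h1 : ∀ s a2, v + u s ≤ (∑ a1, f s a1 * C2 s a1 a2)
        + (∑ l, δ2 l * ∑ a1, f s a1 * D2 l s a1 a2)
        + ∑ s', p s a2 s' * u s')
    (h2 : ∀ s a1, z s ≤ (∑ a2, C1 s a1 a2 * x s a2) + ∑ k, δ1 k * d1 k s a1)
    (h3 : ∀ s', ∑ s, ∑ a2,
      ((if s = s' then (1 : ℝ) else 0) - p s a2 s') * x s a2 = 0)
    (h4 : ∑ s, ∑ a2, x s a2 = 1)
    (h6 : ∀ l, ∑ s, ∑ a1, ∑ a2, f s a1 * D2 l s a1 a2 * x s a2 ≤ ξ2 l)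
    (h9 : ∀ s a2, 0 ≤ x s a2)
    (h10 : ∀ k, 0 ≤ δ1 k)
    (h11 : ∀ l, 0 ≤ δ2 l)
    (hΦ : ((∑ s, ∑ a1, ∑ a2, f s a1 * C1 s a1 a2 * x s a2)
          - (∑ s, z s) + ∑ k, δ1 k * ξ1 k)
      + ((∑ s, ∑ a1, ∑ a2, f s a1 * C2 s a1 a2 * x s a2)
          - v + ∑ l, δ2 l * ξ2 l) = 0) :
    ∀ f' : S → A1 → ℝ,
      (∀ s a1, 0 ≤ f' s a1) →
      (∀ s, ∑ a1, f' s a1 = 1) →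
      (∀ k, ∑ s, ∑ a1, d1 k s a1 * f' s a1 ≤ ξ1 k) →
      (∑ s, ∑ a1, ∑ a2, f s a1 * C1 s a1 a2 * x s a2)
        ≤ ∑ s, ∑ a1, ∑ a2, f' s a1 * C1 s a1 a2 * x s a2 := by
  intro f' hf'0 hf'1 hf'd
  have hz_bound : ∑ s, z s
      ≤ ∑ s, ∑ a1, ∑ a2, f' s a1 * C1 s a1 a2 * x s a2 + ∑ k, δ1 k * ξ1 k := by
    simpa only [mul_sum, mul_assoc] using
      sum_le_sum_cost_add_of_dual_feasible h2 h10 hf'0 hf'1 hf'd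
  have hv_bound : v ≤ ∑ s, ∑ a1, ∑ a2, f s a1 * C2 s a1 a2 * x s a2 + ∑ l, δ2 l * ξ2 l := by
    have hv := le_sum_sum_mul_of_stationary h3 h9 h4 h1
    simp only [add_mul, sum_add_distrib, sum_sum_weighted_sum_mul, sum_sum_sum_mul_comm] at hv
    have hpen : ∑ l, δ2 l * ∑ s, ∑ a1, ∑ a2, f s a1 * D2 l s a1 a2 * x s a2
        ≤ ∑ l, δ2 l * ξ2 l :=
      sum_le_sum fun l _ => mul_le_mul_of_nonneg_left (h6 l) (h11 l)
    linarith
  linarith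

theorem MP1_zero_objective_player1_best_response
    (S A1 A2 : Type) [Fintype S] [DecidableEq S] [Fintype A1] [Fintype A2]
    [Nonempty S] [Nonempty A1] [Nonempty A2]
    (n1 n2 : ℕ)
    (C1 C2 : S → A1 → A2 → ℝ)
    (d1 : Fin n1 → S → A1 → ℝ) (ξ1 : Fin n1 → ℝ)
    (D2 : Fin n2 → S → A1 → A2 → ℝ) (ξ2 : Fin n2 → ℝ)
    (p : S → A2 → S → ℝ)
    (hp0 : ∀ s a s', 0 ≤ p s a s')
    (hp1 : ∀ s a, ∑ s', p s a s' = 1)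
    (v : ℝ) (u z : S → ℝ) (f : S → A1 → ℝ) (x : S → A2 → ℝ)
    (δ1 : Fin n1 → ℝ) (δ2 : Fin n2 → ℝ)
    (h1 : ∀ s a2, v + u s ≤ (∑ a1, f s a1 * C2 s a1 a2)
        + (∑ l, δ2 l * ∑ a1, f s a1 * D2 l s a1 a2)
        + ∑ s', p s a2 s' * u s')
    (h2 : ∀ s a1, z s ≤ (∑ a2, C1 s a1 a2 * x s a2) + ∑ k, δ1 k * d1 k s a1)
    (h3 : ∀ s', ∑ s, ∑ a2,
      ((if s = s' then (1 : ℝ) else 0) - p s a2 s') * x s a2 = 0)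
    (h4 : ∑ s, ∑ a2, x s a2 = 1)
    (h5 : ∀ k, ∑ s, ∑ a1, d1 k s a1 * f s a1 ≤ ξ1 k)
    (h6 : ∀ l, ∑ s, ∑ a1, ∑ a2, f s a1 * D2 l s a1 a2 * x s a2 ≤ ξ2 l)
    (h7 : ∀ s, ∑ a1, f s a1 = 1)
    (h8 : ∀ s a1, 0 ≤ f s a1)
    (h9 : ∀ s a2, 0 ≤ x s a2)
    (h10 : ∀ k, 0 ≤ δ1 k)
    (h11 : ∀ l, 0 ≤ δ2 l)
    (hΦ : ((∑ s, ∑ a1, ∑ a2, f s a1 * C1 s a1 a2 * x s a2)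
          - (∑ s, z s) + ∑ k, δ1 k * ξ1 k)
      + ((∑ s, ∑ a1, ∑ a2, f s a1 * C2 s a1 a2 * x s a2)
          - v + ∑ l, δ2 l * ξ2 l) = 0) :
    ∀ f' : S → A1 → ℝ,
      (∀ s a1, 0 ≤ f' s a1) →
      (∀ s, ∑ a1, f' s a1 = 1) →
      (∀ k, ∑ s, ∑ a1, d1 k s a1 * f' s a1 ≤ ξ1 k) →
      (∑ s, ∑ a1, ∑ a2, f s a1 * C1 s a1 a2 * x s a2)
        ≤ ∑ s, ∑ a1, ∑ a2, f' s a1 * C1 s a1 a2 * x s a2 :=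
  MP1_zero_objective_player1_best_response_general S A1 A2 n1 n2 C1 C2 d1 ξ1 D2 ξ2 p v u z f x δ1 δ2
    h1 h2 h3 h4 h6 h9 h10 h11 hΦ
end

section
/- With the setup of [MP1]: if η* = (v*, u*, z*, f*, x*, δ¹*, δ²*) is feasible for [MP1] with Φ(η*) = 0, then for every x : S × A² → ℝ with x ≥ 0, ∑_{(s,a²)} x(s,a²) = 1, ∑_{(s,a²)} (δ(s,s') − p(s'|s,a²))·x(s,a²) = 0 for all s', and ∑_{(s,a¹,a²)} f*(s,a¹)·D²ˡ(s,a¹,a²)·x(s,a²) ≤ ξ²_l for all l, one has ∑_{(s,a¹,a²)} f*(s,a¹)·C²(s,a¹,a²)·x*(s,a²) ≤ ∑_{(s,a¹,a²)} f*(s,a¹)·C²(s,a¹,a²)·x(s,a²). -/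
/-!
Averaging player 1's dual constraints against the mixed strategy f* shows that the first bracket
of Φ is a nonnegative duality gap, so Φ(η*) = 0 forces cost₂(x*) ≤ v* - ∑ δ²* ξ². When player 2's
Bellman-type inequalities are averaged against a 2-feasible occupation measure x, the u*-terms
cancel by the balance equations, leaving v* ≤ cost₂(x) + ∑ δ²* (D²-cost of x) ≤ cost₂(x) + ∑ δ²* ξ².
-/

open Finset

section Averaging

variable {S A B K : Type*} [Fintype S] [Fintype A] [Fintype B] [Fintype K]

theorem sum_sum_mul_sum_comm (w : S → A → ℝ) (δ : K → ℝ) (g : K → S → A → ℝ) :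
    ∑ s, ∑ a, w s a * ∑ k, δ k * g k s a = ∑ k, δ k * ∑ s, ∑ a, w s a * g k s a :=
  calc _ = ∑ s, ∑ k, δ k * ∑ a, w s a * g k s a := sum_congr rfl fun s _ => by
          simp only [mul_sum]
          rw [sum_comm]
          exact sum_congr rfl fun _ _ => sum_congr rfl fun _ _ => by ring
    _ = _ := by rw [sum_comm]; simp only [mul_sum]

theorem sum_sum_mul_sum_eq_sum_sum_sum (f : S → A → ℝ) (C : S → A → B → ℝ) (x : S → B → ℝ) :
    ∑ s, ∑ b, x s b * ∑ a, f s a * C s a b = ∑ s, ∑ a, ∑ b, f s a * C s a b * x s b :=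
  sum_congr rfl fun s _ => by
    simp only [mul_sum]
    rw [sum_comm]
    exact sum_congr rfl fun _ _ => sum_congr rfl fun _ _ => by ring

theorem sum_le_sum_sum_mul_of_le {w g : S → A → ℝ} {z : S → ℝ}
    (hw0 : ∀ s a, 0 ≤ w s a) (hw1 : ∀ s, ∑ a, w s a = 1) (h : ∀ s a, z s ≤ g s a) :
    ∑ s, z s ≤ ∑ s, ∑ a, w s a * g s a :=
  sum_le_sum fun s _ =>
    calc z s = ∑ a, w s a * z s := by rw [← sum_mul, hw1, one_mul]
      _ ≤ ∑ a, w s a * g s a := sum_le_sum fun a _ => mul_le_mul_of_nonneg_left (h s a) (hw0 s a)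

end Averaging

section AverageCostMDP

variable {S A : Type*} [Fintype S] [Fintype A]

theorem sum_sum_transition_mul_eq_of_balance [DecidableEq S] {p : S → A → S → ℝ}
    {y : S → A → ℝ} {s' : S}
    (hbal : ∑ s, ∑ a, ((if s = s' then (1 : ℝ) else 0) - p s a s') * y s a = 0) :
    ∑ s, ∑ a, y s a * p s a s' = ∑ a, y s' a := by
  rw [eq_comm, ← sub_eq_zero, ← hbal]
  simp [sub_mul, sum_sub_distrib, mul_comm (p _ _ _)]

theorem le_sum_sum_mul_of_bellman {p : S → A → S → ℝ} {y c : S → A → ℝ} {u : S → ℝ} {v : ℝ}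
    (hy0 : ∀ s a, 0 ≤ y s a) (hy1 : ∑ s, ∑ a, y s a = 1)
    (hbal : ∀ s', ∑ s, ∑ a, y s a * p s a s' = ∑ a, y s' a)
    (hv : ∀ s a, v + u s ≤ c s a + ∑ s', p s a s' * u s') :
    v ≤ ∑ s, ∑ a, y s a * c s a := by
  have hsum : ∑ s, ∑ a, y s a * (v + u s) ≤ ∑ s, ∑ a, y s a * (c s a + ∑ s', p s a s' * u s') :=
    sum_le_sum fun s _ => sum_le_sum fun a _ => mul_le_mul_of_nonneg_left (hv s a) (hy0 s a)
  have hv_avg : ∑ s, ∑ a, y s a * v = v := by simp only [← sum_mul, hy1, one_mul]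
  have hu_avg : ∑ s, ∑ a, y s a * u s = ∑ s, u s * ∑ a, y s a :=
    sum_congr rfl fun s _ => by rw [mul_sum]; exact sum_congr rfl fun _ _ => mul_comm _ _
  have hflow : ∑ s, ∑ a, y s a * ∑ s', p s a s' * u s' = ∑ s, u s * ∑ a, y s a := by
    simp only [mul_comm (p _ _ _)]
    rw [sum_sum_mul_sum_comm y u fun s' s a => p s a s']
    exact sum_congr rfl fun s' _ => by rw [hbal s']
  simp only [mul_add, sum_add_distrib, hv_avg, hu_avg, hflow] at hsum
  linarith

end AverageCostMDP

section Game

variable {S A1 A2 K : Type*} [Fintype S] [Fintype A1] [Fintype A2] [Fintype K]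

theorem weak_duality_player1 {C1 : S → A1 → A2 → ℝ} {d1 : K → S → A1 → ℝ} {ξ1 δ1 : K → ℝ}
    {z : S → ℝ} {f : S → A1 → ℝ} {x : S → A2 → ℝ}
    (hz : ∀ s a1, z s ≤ (∑ a2, C1 s a1 a2 * x s a2) + ∑ k, δ1 k * d1 k s a1)
    (hfd : ∀ k, ∑ s, ∑ a1, d1 k s a1 * f s a1 ≤ ξ1 k)
    (hf1 : ∀ s, ∑ a1, f s a1 = 1) (hf0 : ∀ s a1, 0 ≤ f s a1) (hδ1 : ∀ k, 0 ≤ δ1 k) :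
    ∑ s, z s ≤ (∑ s, ∑ a1, ∑ a2, f s a1 * C1 s a1 a2 * x s a2) + ∑ k, δ1 k * ξ1 k :=
  calc ∑ s, z s
      ≤ ∑ s, ∑ a1, f s a1 * ((∑ a2, C1 s a1 a2 * x s a2) + ∑ k, δ1 k * d1 k s a1) :=
        sum_le_sum_sum_mul_of_le hf0 hf1 hz
    _ = (∑ s, ∑ a1, ∑ a2, f s a1 * C1 s a1 a2 * x s a2)
          + ∑ k, δ1 k * ∑ s, ∑ a1, f s a1 * d1 k s a1 := by
        rw [← sum_sum_mul_sum_comm]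
        simp only [mul_add, sum_add_distrib, mul_sum, mul_assoc]
    _ ≤ _ := by
        gcongr with k
        · exact hδ1 k
        · simpa only [mul_comm] using hfd k

theorem weak_duality_player2 [DecidableEq S] {C2 : S → A1 → A2 → ℝ}
    {D2 : K → S → A1 → A2 → ℝ} {ξ2 δ2 : K → ℝ} {p : S → A2 → S → ℝ} {v : ℝ} {u : S → ℝ}
    {f : S → A1 → ℝ} {y : S → A2 → ℝ}
    (hvu : ∀ s a2, v + u s ≤ (∑ a1, f s a1 * C2 s a1 a2)
        + (∑ l, δ2 l * ∑ a1, f s a1 * D2 l s a1 a2)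
        + ∑ s', p s a2 s' * u s')
    (hδ2 : ∀ l, 0 ≤ δ2 l) (hy0 : ∀ s a2, 0 ≤ y s a2) (hy1 : ∑ s, ∑ a2, y s a2 = 1)
    (hbal : ∀ s', ∑ s, ∑ a2, ((if s = s' then (1 : ℝ) else 0) - p s a2 s') * y s a2 = 0)
    (hyD : ∀ l, ∑ s, ∑ a1, ∑ a2, f s a1 * D2 l s a1 a2 * y s a2 ≤ ξ2 l) :
    v ≤ (∑ s, ∑ a1, ∑ a2, f s a1 * C2 s a1 a2 * y s a2) + ∑ l, δ2 l * ξ2 l :=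
  calc v
      ≤ ∑ s, ∑ a2, y s a2 * ((∑ a1, f s a1 * C2 s a1 a2)
          + ∑ l, δ2 l * ∑ a1, f s a1 * D2 l s a1 a2) :=
        le_sum_sum_mul_of_bellman hy0 hy1
          (fun _ => sum_sum_transition_mul_eq_of_balance (hbal _)) hvu
    _ = (∑ s, ∑ a1, ∑ a2, f s a1 * C2 s a1 a2 * y s a2)
          + ∑ l, δ2 l * ∑ s, ∑ a1, ∑ a2, f s a1 * D2 l s a1 a2 * y s a2 := by
        simp only [mul_add, sum_add_distrib]
        rw [sum_sum_mul_sum_comm]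
        simp only [sum_sum_mul_sum_eq_sum_sum_sum]
    _ ≤ _ := by
        gcongr with l
        · exact hδ2 l
        · exact hyD l

end Game

theorem MP1_zero_objective_player2_best_response_general
    (S A1 A2 : Type) [Fintype S] [DecidableEq S] [Fintype A1] [Fintype A2]
    (n1 n2 : ℕ)
    (C1 C2 : S → A1 → A2 → ℝ)
    (d1 : Fin n1 → S → A1 → ℝ) (ξ1 : Fin n1 → ℝ)
    (D2 : Fin n2 → S → A1 → A2 → ℝ) (ξ2 : Fin n2 → ℝ)
    (p : S → A2 → S → ℝ)
    (v : ℝ) (u z : S → ℝ) (f : S → A1 → ℝ) (x : S → A2 → ℝ)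
    (δ1 : Fin n1 → ℝ) (δ2 : Fin n2 → ℝ)
    (h1 : ∀ s a2, v + u s ≤ (∑ a1, f s a1 * C2 s a1 a2)
        + (∑ l, δ2 l * ∑ a1, f s a1 * D2 l s a1 a2)
        + ∑ s', p s a2 s' * u s')
    (h2 : ∀ s a1, z s ≤ (∑ a2, C1 s a1 a2 * x s a2) + ∑ k, δ1 k * d1 k s a1)
    (h5 : ∀ k, ∑ s, ∑ a1, d1 k s a1 * f s a1 ≤ ξ1 k)
    (h7 : ∀ s, ∑ a1, f s a1 = 1)
    (h8 : ∀ s a1, 0 ≤ f s a1)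
    (h10 : ∀ k, 0 ≤ δ1 k)
    (h11 : ∀ l, 0 ≤ δ2 l)
    (hΦ : ((∑ s, ∑ a1, ∑ a2, f s a1 * C1 s a1 a2 * x s a2)
          - (∑ s, z s) + ∑ k, δ1 k * ξ1 k)
      + ((∑ s, ∑ a1, ∑ a2, f s a1 * C2 s a1 a2 * x s a2)
          - v + ∑ l, δ2 l * ξ2 l) = 0) :
    ∀ x' : S → A2 → ℝ,
      (∀ s a2, 0 ≤ x' s a2) →
      (∑ s, ∑ a2, x' s a2 = 1) →
      (∀ s', ∑ s, ∑ a2,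
        ((if s = s' then (1 : ℝ) else 0) - p s a2 s') * x' s a2 = 0) →
      (∀ l, ∑ s, ∑ a1, ∑ a2, f s a1 * D2 l s a1 a2 * x' s a2 ≤ ξ2 l) →
      (∑ s, ∑ a1, ∑ a2, f s a1 * C2 s a1 a2 * x s a2)
        ≤ ∑ s, ∑ a1, ∑ a2, f s a1 * C2 s a1 a2 * x' s a2 := by
  intro x' hx'0 hx'1 hx'bal hx'D
  have gap1 := weak_duality_player1 h2 h5 h7 h8 h10
  have gap2 := weak_duality_player2 h1 h11 hx'0 hx'1 hx'bal hx'D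
  linarith

theorem MP1_zero_objective_player2_best_response
    (S A1 A2 : Type) [Fintype S] [DecidableEq S] [Fintype A1] [Fintype A2]
    [Nonempty S] [Nonempty A1] [Nonempty A2]
    (n1 n2 : ℕ)
    (C1 C2 : S → A1 → A2 → ℝ)
    (d1 : Fin n1 → S → A1 → ℝ) (ξ1 : Fin n1 → ℝ)
    (D2 : Fin n2 → S → A1 → A2 → ℝ) (ξ2 : Fin n2 → ℝ)
    (p : S → A2 → S → ℝ)
    (hp0 : ∀ s a s', 0 ≤ p s a s')
    (hp1 : ∀ s a, ∑ s', p s a s' = 1)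
    (v : ℝ) (u z : S → ℝ) (f : S → A1 → ℝ) (x : S → A2 → ℝ)
    (δ1 : Fin n1 → ℝ) (δ2 : Fin n2 → ℝ)
    (h1 : ∀ s a2, v + u s ≤ (∑ a1, f s a1 * C2 s a1 a2)
        + (∑ l, δ2 l * ∑ a1, f s a1 * D2 l s a1 a2)
        + ∑ s', p s a2 s' * u s')
    (h2 : ∀ s a1, z s ≤ (∑ a2, C1 s a1 a2 * x s a2) + ∑ k, δ1 k * d1 k s a1)
    (h3 : ∀ s', ∑ s, ∑ a2,
      ((if s = s' then (1 : ℝ) else 0) - p s a2 s') * x s a2 = 0)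
    (h4 : ∑ s, ∑ a2, x s a2 = 1)
    (h5 : ∀ k, ∑ s, ∑ a1, d1 k s a1 * f s a1 ≤ ξ1 k)
    (h6 : ∀ l, ∑ s, ∑ a1, ∑ a2, f s a1 * D2 l s a1 a2 * x s a2 ≤ ξ2 l)
    (h7 : ∀ s, ∑ a1, f s a1 = 1)
    (h8 : ∀ s a1, 0 ≤ f s a1)
    (h9 : ∀ s a2, 0 ≤ x s a2)
    (h10 : ∀ k, 0 ≤ δ1 k)
    (h11 : ∀ l, 0 ≤ δ2 l)
    (hΦ : ((∑ s, ∑ a1, ∑ a2, f s a1 * C1 s a1 a2 * x s a2)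
          - (∑ s, z s) + ∑ k, δ1 k * ξ1 k)
      + ((∑ s, ∑ a1, ∑ a2, f s a1 * C2 s a1 a2 * x s a2)
          - v + ∑ l, δ2 l * ξ2 l) = 0) :
    ∀ x' : S → A2 → ℝ,
      (∀ s a2, 0 ≤ x' s a2) →
      (∑ s, ∑ a2, x' s a2 = 1) →
      (∀ s', ∑ s, ∑ a2,
        ((if s = s' then (1 : ℝ) else 0) - p s a2 s') * x' s a2 = 0) →
      (∀ l, ∑ s, ∑ a1, ∑ a2, f s a1 * D2 l s a1 a2 * x' s a2 ≤ ξ2 l) →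
      (∑ s, ∑ a1, ∑ a2, f s a1 * C2 s a1 a2 * x s a2)
        ≤ ∑ s, ∑ a1, ∑ a2, f s a1 * C2 s a1 a2 * x' s a2 :=
  MP1_zero_objective_player2_best_response_general S A1 A2 n1 n2 C1 C2 d1 ξ1 D2 ξ2 p v u z f x δ1 δ2
    h1 h2 h5 h7 h8 h10 h11 hΦ
end

section
/- Let S, A¹, A² be finite nonempty sets, β ∈ [0,1), γ a probability distribution on S, p : S × A² → (S → ℝ) a transition kernel, and consider the mathematical program [MP2] with variables (u, z, f, x, δ¹, δ²) subject to: (i) u(s) ≤ ∑_{a¹} f(s,a¹)·C²(s,a¹,a²) + ∑_l δ²_l·∑_{a¹} f(s,a¹)·D²ˡ(s,a¹,a²) + β·∑_{s'} p(s'|s,a²)·u(s') for all (s,a²); (ii) z(s) ≤ ∑_{a²} C¹(s,a¹,a²)·x(s,a²) + ∑_k δ¹_k·d¹ᵏ(s,a¹) for all (s,a¹); (iii) ∑_{(s,a²)} (δ(s,s') − β·p(s'|s,a²))·x(s,a²) = (1−β)·γ(s') for all s'; (iv) ∑_{(s,a¹)} d¹ᵏ(s,a¹)·f(s,a¹) ≤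 ξ¹_k for all k; (v) ∑_{(s,a¹,a²)} f(s,a¹)·D²ˡ(s,a¹,a²)·x(s,a²) ≤ ξ²_l for all l; (vi) ∑_{a¹} f(s,a¹) = 1 for all s; and f, x, δ¹, δ² ≥ 0. Then the objective Φ = (∑_{(s,a¹,a²)} f(s,a¹)·C¹(s,a¹,a²)·x(s,a²) − ∑_s z(s) + (δ¹)ᵀξ¹) + (∑_{(s,a¹,a²)} f(s,a¹)·C²(s,a¹,a²)·x(s,a²) − (1−β)·∑_s γ(s)·u(s) + (δ²)ᵀξ²) is nonnegative at every feasible point. -/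
/-!
Both halves of the objective are duality gaps. For player 1, averaging constraint (ii) against
the probability vector `f s ·` and pricing the subscription constraints (iv) with `δ¹ ≥ 0` bounds
`∑ z` by the first cost term plus `(δ¹)ᵀξ¹`. For player 2, the balance equations (iii) turn
`(1 - β) ∑ γ u` into `∑ x(s,a²) (u s - β ∑ p u)`, and weighting (i) by `x ≥ 0` and pricing the
realization constraints (v) with `δ² ≥ 0` bounds it by the second cost term plus `(δ²)ᵀξ²`.
-/

open Finset

theorem sum_mul_le_of_le_add_multipliers {R ι κ : Type*} [CommSemiring R] [PartialOrder R]
    [IsOrderedRing R] [Fintype ι] [Fintype κ] (w v c : ι → R) (a : κ → ι → R) (δ ξ : κ → R)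
    (hw : ∀ i, 0 ≤ w i) (hδ : ∀ k, 0 ≤ δ k)
    (hv : ∀ i, v i ≤ c i + ∑ k, δ k * a k i)
    (ha : ∀ k, ∑ i, w i * a k i ≤ ξ k) :
    ∑ i, w i * v i ≤ ∑ i, w i * c i + ∑ k, δ k * ξ k :=
  calc ∑ i, w i * v i ≤ ∑ i, w i * (c i + ∑ k, δ k * a k i) :=
        sum_le_sum fun i _ => mul_le_mul_of_nonneg_left (hv i) (hw i)
    _ = ∑ i, w i * c i + ∑ k, δ k * ∑ i, w i * a k i := by
        simp only [mul_add, sum_add_distrib, mul_sum]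
        rw [sum_comm (f := fun i k => w i * (δ k * a k i))]
        simp only [mul_left_comm]
    _ ≤ ∑ i, w i * c i + ∑ k, δ k * ξ k := by
        gcongr with k
        · exact hδ k
        · exact ha k

theorem sum_mul_sub_discounted_eq_of_balance {R S A : Type*} [CommRing R] [Fintype S]
    [DecidableEq S] [Fintype A] (β : R) (γ : S → R) (p : S → A → S → R) (x : S → A → R)
    (u : S → R) (hx : ∀ s', ∑ s, ∑ a, ((if s = s' then (1 : R) else 0) - β * p s a s') * x s a
      = (1 - β) * γ s') :
    ∑ s, ∑ a, x s a * (u s - β * ∑ s', p s a s' * u s') = (1 - β) * ∑ s, γ s * u s := by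
  calc ∑ s, ∑ a, x s a * (u s - β * ∑ s', p s a s' * u s')
      = ∑ s, ∑ a, ∑ s', ((if s = s' then (1 : R) else 0) - β * p s a s') * x s a * u s' := by
        refine sum_congr rfl fun s _ => sum_congr rfl fun a _ => ?_
        simp only [sub_mul, ite_mul, one_mul, zero_mul, sum_sub_distrib, sum_ite_eq, mem_univ,
          if_true, mul_sub, mul_sum]
        congr 1
        exact sum_congr rfl fun s' _ => by ring
    _ = ∑ s', (∑ s, ∑ a, ((if s = s' then (1 : R) else 0) - β * p s a s') * x s a) * u s' := by
        simp only [sum_mul]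
        exact sum_comm_cycle
    _ = (1 - β) * ∑ s, γ s * u s := by
        simp only [hx, mul_sum, mul_assoc]

theorem MP2_objective_nonneg_general
    (S A1 A2 : Type) [Fintype S] [DecidableEq S] [Fintype A1] [Fintype A2]
    (n1 n2 : ℕ)
    (β : ℝ)
    (γ : S → ℝ)
    (C1 C2 : S → A1 → A2 → ℝ)
    (d1 : Fin n1 → S → A1 → ℝ) (ξ1 : Fin n1 → ℝ)
    (D2 : Fin n2 → S → A1 → A2 → ℝ) (ξ2 : Fin n2 → ℝ)
    (p : S → A2 → S → ℝ)
    (u z : S → ℝ) (f : S → A1 → ℝ) (x : S → A2 → ℝ)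
    (δ1 : Fin n1 → ℝ) (δ2 : Fin n2 → ℝ)
    (h1 : ∀ s a2, u s ≤ (∑ a1, f s a1 * C2 s a1 a2)
        + (∑ l, δ2 l * ∑ a1, f s a1 * D2 l s a1 a2)
        + β * ∑ s', p s a2 s' * u s')
    (h2 : ∀ s a1, z s ≤ (∑ a2, C1 s a1 a2 * x s a2) + ∑ k, δ1 k * d1 k s a1)
    (h3 : ∀ s', ∑ s, ∑ a2,
      ((if s = s' then (1 : ℝ) else 0) - β * p s a2 s') * x s a2
        = (1 - β) * γ s')
    (h4 : ∀ k, ∑ s, ∑ a1, d1 k s a1 * f s a1 ≤ ξ1 k)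
    (h5 : ∀ l, ∑ s, ∑ a1, ∑ a2, f s a1 * D2 l s a1 a2 * x s a2 ≤ ξ2 l)
    (h6 : ∀ s, ∑ a1, f s a1 = 1)
    (h7 : ∀ s a1, 0 ≤ f s a1)
    (h8 : ∀ s a2, 0 ≤ x s a2)
    (h9 : ∀ k, 0 ≤ δ1 k)
    (h10 : ∀ l, 0 ≤ δ2 l) :
    0 ≤ ((∑ s, ∑ a1, ∑ a2, f s a1 * C1 s a1 a2 * x s a2)
          - (∑ s, z s) + ∑ k, δ1 k * ξ1 k)
      + ((∑ s, ∑ a1, ∑ a2, f s a1 * C2 s a1 a2 * x s a2)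
          - (1 - β) * (∑ s, γ s * u s) + ∑ l, δ2 l * ξ2 l) := by
  have player1 : ∑ s, z s
      ≤ ∑ s, ∑ a1, ∑ a2, f s a1 * C1 s a1 a2 * x s a2 + ∑ k, δ1 k * ξ1 k := by
    have bound := sum_mul_le_of_le_add_multipliers (fun i : S × A1 => f i.1 i.2)
      (fun i => z i.1) (fun i => ∑ a2, C1 i.1 i.2 a2 * x i.1 a2) (fun k i => d1 k i.1 i.2)
      δ1 ξ1 (fun i => h7 i.1 i.2) h9 (fun i => h2 i.1 i.2)
      (fun k => by simpa only [Fintype.sum_prod_type, mul_comm] using h4 k)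
    simpa only [Fintype.sum_prod_type, ← sum_mul, h6, one_mul, mul_sum, mul_assoc] using bound
  have player2 : ∑ s, ∑ a2, x s a2 * (u s - β * ∑ s', p s a2 s' * u s')
      ≤ ∑ s, ∑ a1, ∑ a2, f s a1 * C2 s a1 a2 * x s a2 + ∑ l, δ2 l * ξ2 l := by
    have bound := sum_mul_le_of_le_add_multipliers (fun i : S × A2 => x i.1 i.2)
      (fun i => u i.1 - β * ∑ s', p i.1 i.2 s' * u s') (fun i => ∑ a1, f i.1 a1 * C2 i.1 a1 i.2)
      (fun l i => ∑ a1, f i.1 a1 * D2 l i.1 a1 i.2) δ2 ξ2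
      (fun i => h8 i.1 i.2) h10 (fun i => by linarith [h1 i.1 i.2])
      (fun l => (h5 l).trans_eq' ?_)
    · simpa only [Fintype.sum_prod_type, mul_sum, sum_comm (s := (univ : Finset A1)),
        mul_comm, mul_left_comm] using bound
    · simp only [Fintype.sum_prod_type, mul_sum]
      refine sum_congr rfl fun s _ => sum_comm.trans (sum_congr rfl fun a1 _ => ?_)
      exact sum_congr rfl fun a2 _ => by ring
  rw [← sum_mul_sub_discounted_eq_of_balance β γ p x u h3]
  linarith

theorem MP2_objective_nonneg
    (S A1 A2 : Type) [Fintype S] [DecidableEq S] [Fintype A1] [Fintype A2]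
    [Nonempty S] [Nonempty A1] [Nonempty A2]
    (n1 n2 : ℕ)
    (β : ℝ) (hβ0 : 0 ≤ β) (hβ1 : β < 1)
    (γ : S → ℝ) (hγ0 : ∀ s, 0 ≤ γ s) (hγ1 : ∑ s, γ s = 1)
    (C1 C2 : S → A1 → A2 → ℝ)
    (d1 : Fin n1 → S → A1 → ℝ) (ξ1 : Fin n1 → ℝ)
    (D2 : Fin n2 → S → A1 → A2 → ℝ) (ξ2 : Fin n2 → ℝ)
    (p : S → A2 → S → ℝ)
    (hp0 : ∀ s a s', 0 ≤ p s a s')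
    (hp1 : ∀ s a, ∑ s', p s a s' = 1)
    (u z : S → ℝ) (f : S → A1 → ℝ) (x : S → A2 → ℝ)
    (δ1 : Fin n1 → ℝ) (δ2 : Fin n2 → ℝ)
    (h1 : ∀ s a2, u s ≤ (∑ a1, f s a1 * C2 s a1 a2)
        + (∑ l, δ2 l * ∑ a1, f s a1 * D2 l s a1 a2)
        + β * ∑ s', p s a2 s' * u s')
    (h2 : ∀ s a1, z s ≤ (∑ a2, C1 s a1 a2 * x s a2) + ∑ k, δ1 k * d1 k s a1)
    (h3 : ∀ s', ∑ s, ∑ a2,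
      ((if s = s' then (1 : ℝ) else 0) - β * p s a2 s') * x s a2
        = (1 - β) * γ s')
    (h4 : ∀ k, ∑ s, ∑ a1, d1 k s a1 * f s a1 ≤ ξ1 k)
    (h5 : ∀ l, ∑ s, ∑ a1, ∑ a2, f s a1 * D2 l s a1 a2 * x s a2 ≤ ξ2 l)
    (h6 : ∀ s, ∑ a1, f s a1 = 1)
    (h7 : ∀ s a1, 0 ≤ f s a1)
    (h8 : ∀ s a2, 0 ≤ x s a2)
    (h9 : ∀ k, 0 ≤ δ1 k)
    (h10 : ∀ l, 0 ≤ δ2 l) :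
    0 ≤ ((∑ s, ∑ a1, ∑ a2, f s a1 * C1 s a1 a2 * x s a2)
          - (∑ s, z s) + ∑ k, δ1 k * ξ1 k)
      + ((∑ s, ∑ a1, ∑ a2, f s a1 * C2 s a1 a2 * x s a2)
          - (1 - β) * (∑ s, γ s * u s) + ∑ l, δ2 l * ξ2 l) :=
  MP2_objective_nonneg_general S A1 A2 n1 n2 β γ C1 C2 d1 ξ1 D2 ξ2 p u z f x δ1 δ2 h1 h2 h3 h4 h5 h6
    h7 h8 h9 h10
end

section
/- Let N ≥ 1 and for each player i ∈ {1,…,N} let Sⁱ, Aⁱ be finite nonempty sets, pⁱ a transition kernel on Sⁱ × Aⁱ, cⁱ : (∏_j Sʲ × Aʲ) → ℝ cost functions, dⁱᵏ : (∏_j Sʲ × Aʲ) → ℝ constraint costs with bounds ξⁱ_k for k = 1,…,nᵢ. Consider the mathematical program [MP3] with variables (vⁱ ∈ ℝ, uⁱ : Sⁱ → ℝ, xⁱ : Sⁱ × Aⁱ → ℝ, δⁱ ∈ ℝ^{nᵢ})_{i=1}^N subject to: (i) vⁱ + uⁱ(sⁱ) ≤ ∑_{(s,a)^{-i}} (∏_{j≠i}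 xʲ(sʲ,aʲ))·cⁱ(s,a) + ∑_k δⁱ_k·∑_{(s,a)^{-i}} (∏_{j≠i} xʲ(sʲ,aʲ))·dⁱᵏ(s,a) + ∑_{s̄ⁱ} pⁱ(s̄ⁱ|sⁱ,aⁱ)·uⁱ(s̄ⁱ) for all (sⁱ,aⁱ) and all i; (ii) ∑_{(sⁱ,aⁱ)} (δ(sⁱ,s̄ⁱ) − pⁱ(s̄ⁱ|sⁱ,aⁱ))·xⁱ(sⁱ,aⁱ) = 0 for all s̄ⁱ, all i; (iii) ∑_{(sⁱ,aⁱ)} xⁱ(sⁱ,aⁱ) = 1 for all i; (iv) ∑_{(s,a)} (∏_j xʲ(sʲ,aʲ))·dⁱᵏ(s,a) ≤ ξⁱ_k for all k, i; (v) xⁱ ≥ 0; (vi) δⁱ ≥ 0. Then the objective ψ = ∑_{i=1}^N [∑_{(s,a)} (∏_j xʲ(sʲ,aʲ))·cⁱ(s,a) − vⁱ + ∑_k δⁱ_k·ξⁱ_k] is nonnegative at every feasible point. -/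
lemma sum_comm3 {α β γ : Type*} [Fintype α] [Fintype β] [Fintype γ]
    (g : α → β → γ → ℝ) :
    ∑ a, ∑ b, ∑ c, g a b c = ∑ c, ∑ a, ∑ b, g a b c := by
  calc ∑ a, ∑ b, ∑ c, g a b c
      = ∑ a, ∑ c, ∑ b, g a b c := Finset.sum_congr rfl (fun a _ => Finset.sum_comm)
    _ = ∑ c, ∑ a, ∑ b, g a b c := Finset.sum_comm

lemma sum_comm4 {α β γ δ : Type*} [Fintype α] [Fintype β] [Fintype γ] [Fintype δ]
    (g : α → β → γ → δ → ℝ) :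
    ∑ a, ∑ b, ∑ c, ∑ e, g a b c e = ∑ c, ∑ e, ∑ a, ∑ b, g a b c e := by
  calc ∑ a, ∑ b, ∑ c, ∑ e, g a b c e
      = ∑ c, ∑ a, ∑ b, ∑ e, g a b c e := sum_comm3 (fun a b c => ∑ e, g a b c e)
    _ = ∑ c, ∑ e, ∑ a, ∑ b, g a b c e :=
        Finset.sum_congr rfl (fun c _ => sum_comm3 (fun a b e => g a b c e))

lemma collapse2 {α β : Type*} [Fintype α] [DecidableEq α] [Fintype β] [DecidableEq β]
    (a0 : α) (b0 : β) (X : α → β → ℝ) :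
    ∑ a, ∑ b, (if a0 = a ∧ b0 = b then X a b else 0) = X a0 b0 := by
  rw [Finset.sum_eq_single a0]
  · rw [Finset.sum_eq_single b0]
    · simp
    · intro b _ hb; simp [Ne.symm hb]
    · simp
  · intro a _ ha
    exact Finset.sum_eq_zero fun b _ => by simp [Ne.symm ha]
  · simp

theorem MP3_objective_nonneg
    (N : ℕ) (hN : 1 ≤ N)
    (S A : Fin N → Type)
    [∀ i, Fintype (S i)] [∀ i, DecidableEq (S i)] [∀ i, Nonempty (S i)]
    [∀ i, Fintype (A i)] [∀ i, DecidableEq (A i)] [∀ i, Nonempty (A i)]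
    (n : Fin N → ℕ)
    (p : ∀ i, S i → A i → S i → ℝ)
    (hp0 : ∀ i si ai si', 0 ≤ p i si ai si')
    (hp1 : ∀ i si ai, ∑ si', p i si ai si' = 1)
    (c : Fin N → (∀ j, S j) → (∀ j, A j) → ℝ)
    (d : ∀ i : Fin N, Fin (n i) → (∀ j, S j) → (∀ j, A j) → ℝ)
    (ξ : ∀ i : Fin N, Fin (n i) → ℝ)
    (v : Fin N → ℝ) (u : ∀ i, S i → ℝ)
    (x : ∀ i, S i → A i → ℝ) (δ : ∀ i : Fin N, Fin (n i) → ℝ)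
    (h1 : ∀ i (si : S i) (ai : A i),
      v i + u i si ≤
        (∑ s : ∀ j, S j, ∑ a : ∀ j, A j,
          if s i = si ∧ a i = ai then
            (∏ j ∈ Finset.univ.erase i, x j (s j) (a j)) * c i s a
          else 0)
        + (∑ k, δ i k * ∑ s : ∀ j, S j, ∑ a : ∀ j, A j,
            if s i = si ∧ a i = ai then
              (∏ j ∈ Finset.univ.erase i, x j (s j) (a j)) * d i k s a
            else 0)
        + ∑ si', p i si ai si' * u i si')
    (h2 : ∀ i (si' : S i), ∑ si : S i, ∑ ai : A i,
      ((if si = si' then (1 : ℝ) else 0) - p i si ai si') * x i si ai = 0)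
    (h3 : ∀ i, ∑ si : S i, ∑ ai : A i, x i si ai = 1)
    (h4 : ∀ i k, ∑ s : ∀ j, S j, ∑ a : ∀ j, A j,
        (∏ j, x j (s j) (a j)) * d i k s a ≤ ξ i k)
    (h5 : ∀ i si ai, 0 ≤ x i si ai)
    (h6 : ∀ i k, 0 ≤ δ i k)
    :
    0 ≤ ∑ i, ((∑ s : ∀ j, S j, ∑ a : ∀ j, A j,
          (∏ j, x j (s j) (a j)) * c i s a)
        - v i + ∑ k, δ i k * ξ i k) := by
  apply Finset.sum_nonneg
  intro i _
  -- key aggregation lemma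
  have key : ∀ f : (∀ j, S j) → (∀ j, A j) → ℝ,
      (∑ si : S i, ∑ ai : A i, x i si ai *
        (∑ s : ∀ j, S j, ∑ a : ∀ j, A j,
          if s i = si ∧ a i = ai then
            (∏ j ∈ Finset.univ.erase i, x j (s j) (a j)) * f s a else 0))
      = ∑ s : ∀ j, S j, ∑ a : ∀ j, A j, (∏ j, x j (s j) (a j)) * f s a := by
    intro f
    simp_rw [Finset.mul_sum, mul_ite, mul_zero]
    rw [sum_comm4 (fun si ai s a =>
      if s i = si ∧ a i = ai then
        x i si ai * ((∏ j ∈ Finset.univ.erase i, x j (s j) (a j)) * f s a) else 0)]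
    refine Finset.sum_congr rfl fun s _ => Finset.sum_congr rfl fun a _ => ?_
    rw [collapse2 (s i) (a i)
      (fun si ai => x i si ai * ((∏ j ∈ Finset.univ.erase i, x j (s j) (a j)) * f s a)),
      ← Finset.mul_prod_erase Finset.univ _ (Finset.mem_univ i), mul_assoc]
  -- the occupation-measure balance: p-weighted sums of x
  have hp2 : ∀ si' : S i, ∑ si : S i, ∑ ai : A i, p i si ai si' * x i si ai
      = ∑ ai : A i, x i si' ai := by
    intro si'
    have h := h2 i si'
    simp_rw [sub_mul, Finset.sum_sub_distrib, sub_eq_zero] at h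
    rw [← h, Finset.sum_comm]
    simp only [ite_mul, one_mul, zero_mul, Finset.sum_ite_eq', Finset.mem_univ, if_true]
  -- third term equals the u-weighted mass
  have hu : (∑ si : S i, ∑ ai : A i, x i si ai * (∑ si', p i si ai si' * u i si'))
      = ∑ si : S i, ∑ ai : A i, x i si ai * u i si := by
    simp_rw [Finset.mul_sum]
    rw [sum_comm3 (fun si ai si' => x i si ai * (p i si ai si' * u i si'))]
    have : ∀ si' : S i,
        (∑ si : S i, ∑ ai : A i, x i si ai * (p i si ai si' * u i si'))
        = (∑ ai : A i, x i si' ai) * u i si' := by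
      intro si'
      rw [← hp2 si', Finset.sum_mul]
      refine Finset.sum_congr rfl fun si _ => ?_
      rw [Finset.sum_mul]
      refine Finset.sum_congr rfl fun ai _ => by ring
    simp_rw [this, Finset.sum_mul]
  -- sum the main inequality with weights x i si ai ≥ 0
  have hle : (∑ si : S i, ∑ ai : A i, x i si ai * (v i + u i si))
      ≤ ∑ si : S i, ∑ ai : A i, x i si ai *
        ((∑ s : ∀ j, S j, ∑ a : ∀ j, A j,
          if s i = si ∧ a i = ai then
            (∏ j ∈ Finset.univ.erase i, x j (s j) (a j)) * c i s a else 0)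
        + (∑ k, δ i k * ∑ s : ∀ j, S j, ∑ a : ∀ j, A j,
            if s i = si ∧ a i = ai then
              (∏ j ∈ Finset.univ.erase i, x j (s j) (a j)) * d i k s a else 0)
        + ∑ si', p i si ai si' * u i si') :=
    Finset.sum_le_sum fun si _ => Finset.sum_le_sum fun ai _ =>
      mul_le_mul_of_nonneg_left (h1 i si ai) (h5 i si ai)
  -- compute the LHS of hle
  have hL : (∑ si : S i, ∑ ai : A i, x i si ai * (v i + u i si))
      = v i + ∑ si : S i, ∑ ai : A i, x i si ai * u i si := by
    simp_rw [mul_add, Finset.sum_add_distrib]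
    congr 1
    have : ∀ si : S i, (∑ ai : A i, x i si ai * v i) = (∑ ai : A i, x i si ai) * v i :=
      fun si => (Finset.sum_mul _ _ _).symm
    simp_rw [this, ← Finset.sum_mul, h3 i, one_mul]
  -- compute the RHS of hle
  have hR : (∑ si : S i, ∑ ai : A i, x i si ai *
        ((∑ s : ∀ j, S j, ∑ a : ∀ j, A j,
          if s i = si ∧ a i = ai then
            (∏ j ∈ Finset.univ.erase i, x j (s j) (a j)) * c i s a else 0)
        + (∑ k, δ i k * ∑ s : ∀ j, S j, ∑ a : ∀ j, A j,
            if s i = si ∧ a i = ai then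
              (∏ j ∈ Finset.univ.erase i, x j (s j) (a j)) * d i k s a else 0)
        + ∑ si', p i si ai si' * u i si'))
      = (∑ s : ∀ j, S j, ∑ a : ∀ j, A j, (∏ j, x j (s j) (a j)) * c i s a)
        + (∑ k, δ i k * ∑ s : ∀ j, S j, ∑ a : ∀ j, A j,
            (∏ j, x j (s j) (a j)) * d i k s a)
        + ∑ si : S i, ∑ ai : A i, x i si ai * u i si := by
    simp_rw [mul_add, Finset.sum_add_distrib]
    rw [key (c i), hu]
    congr 1
    congr 1
    -- the δ-term
    calc (∑ si : S i, ∑ ai : A i, x i si ai *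
          (∑ k, δ i k * ∑ s : ∀ j, S j, ∑ a : ∀ j, A j,
            if s i = si ∧ a i = ai then
              (∏ j ∈ Finset.univ.erase i, x j (s j) (a j)) * d i k s a else 0))
        = ∑ si : S i, ∑ ai : A i, ∑ k, δ i k * (x i si ai *
            (∑ s : ∀ j, S j, ∑ a : ∀ j, A j,
              if s i = si ∧ a i = ai then
                (∏ j ∈ Finset.univ.erase i, x j (s j) (a j)) * d i k s a else 0)) := by
          refine Finset.sum_congr rfl fun si _ => Finset.sum_congr rfl fun ai _ => ?_
          rw [Finset.mul_sum]
          exact Finset.sum_congr rfl fun k _ => by ring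
      _ = ∑ k, ∑ si : S i, ∑ ai : A i, δ i k * (x i si ai *
            (∑ s : ∀ j, S j, ∑ a : ∀ j, A j,
              if s i = si ∧ a i = ai then
                (∏ j ∈ Finset.univ.erase i, x j (s j) (a j)) * d i k s a else 0)) :=
          sum_comm3 _
      _ = ∑ k, δ i k * ∑ s : ∀ j, S j, ∑ a : ∀ j, A j,
            (∏ j, x j (s j) (a j)) * d i k s a := by
          refine Finset.sum_congr rfl fun k _ => ?_
          simp_rw [← Finset.mul_sum]
          congr 1
          exact key (d i k)
  -- put things together
  have hdelta : (∑ k, δ i k * ∑ s : ∀ j, S j, ∑ a : ∀ j, A j,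
        (∏ j, x j (s j) (a j)) * d i k s a)
      ≤ ∑ k, δ i k * ξ i k :=
    Finset.sum_le_sum fun k _ => mul_le_mul_of_nonneg_left (h4 i k) (h6 i k)
  rw [hL, hR] at hle
  linarith
end

section
/- With the setup of [MP3]: if ζ* = (vⁱ*, uⁱ*, xⁱ*, δⁱ*)_{i=1}^N is feasible for [MP3] with ψ(ζ*) = 0, then for every player i and every xⁱ : Sⁱ × Aⁱ → ℝ satisfying xⁱ ≥ 0, ∑_{(sⁱ,aⁱ)} xⁱ(sⁱ,aⁱ) = 1, the balance equations ∑_{(sⁱ,aⁱ)} (δ(sⁱ,s̄ⁱ) − pⁱ(s̄ⁱ|sⁱ,aⁱ))·xⁱ(sⁱ,aⁱ) = 0 for all s̄ⁱ, and the i-feasibility constraints ∑_{(s,a)} xⁱ(sⁱ,aⁱ)·(∏_{j≠i} xʲ*(sʲ,aʲ))·dⁱᵏ(s,a) ≤ ξⁱ_k for all k, one has ∑_{(s,a)} (∏_j xʲ*(sʲ,aʲ))·cⁱ(s,a) ≤ ∑_{(s,a)} xⁱ(sⁱ,aⁱ)·(∏_{j≠i} xʲ*(sʲ,aʲ))·cⁱ(s,a).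 -/
lemma sum4comm {α β γ ε : Type} [Fintype α] [Fintype β] [Fintype γ] [Fintype ε]
    (f : α → β → γ → ε → ℝ) :
    ∑ a, ∑ b, ∑ x, ∑ y, f a b x y = ∑ x, ∑ y, ∑ a, ∑ b, f a b x y := by
  calc ∑ a, ∑ b, ∑ x, ∑ y, f a b x y
      = ∑ a, ∑ x, ∑ b, ∑ y, f a b x y :=
        Finset.sum_congr rfl fun a _ => Finset.sum_comm
    _ = ∑ x, ∑ a, ∑ b, ∑ y, f a b x y := Finset.sum_comm
    _ = ∑ x, ∑ a, ∑ y, ∑ b, f a b x y :=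
        Finset.sum_congr rfl fun x _ => Finset.sum_congr rfl fun a _ =>
          Finset.sum_comm
    _ = ∑ x, ∑ y, ∑ a, ∑ b, f a b x y :=
        Finset.sum_congr rfl fun x _ => Finset.sum_comm

lemma sum_factor {N : ℕ} {S A : Fin N → Type}
    [∀ i, Fintype (S i)] [∀ i, DecidableEq (S i)]
    [∀ i, Fintype (A i)] [∀ i, DecidableEq (A i)]
    (i : Fin N) (F : S i → A i → ℝ)
    (h : (∀ j, S j) → (∀ j, A j) → ℝ) :
    ∑ s : ∀ j, S j, ∑ a : ∀ j, A j, F (s i) (a i) * h s a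
    = ∑ si : S i, ∑ ai : A i, F si ai *
        ∑ s : ∀ j, S j, ∑ a : ∀ j, A j,
          (if s i = si ∧ a i = ai then h s a else 0) := by
  symm
  calc ∑ si : S i, ∑ ai : A i, F si ai *
        ∑ s : ∀ j, S j, ∑ a : ∀ j, A j,
          (if s i = si ∧ a i = ai then h s a else 0)
      = ∑ si : S i, ∑ ai : A i, ∑ s : ∀ j, S j, ∑ a : ∀ j, A j,
          (if s i = si ∧ a i = ai then F si ai * h s a else 0) := by
        simp [Finset.mul_sum, mul_ite]
    _ = ∑ s : ∀ j, S j, ∑ a : ∀ j, A j, ∑ si : S i, ∑ ai : A i,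
          (if s i = si ∧ a i = ai then F si ai * h s a else 0) :=
        sum4comm _
    _ = ∑ s : ∀ j, S j, ∑ a : ∀ j, A j, F (s i) (a i) * h s a := by
        refine Finset.sum_congr rfl fun s _ => Finset.sum_congr rfl fun a _ => ?_
        simp [ite_and, Finset.sum_ite_eq]

lemma key_ineq {S A : Type} [Fintype S] [DecidableEq S] [Fintype A] {n : ℕ}
    (p : S → A → S → ℝ) (C : S → A → ℝ) (D : Fin n → S → A → ℝ)
    (δ : Fin n → ℝ) (ξ : Fin n → ℝ) (v : ℝ) (u : S → ℝ)
    (h1 : ∀ si ai, v + u si ≤ C si ai + (∑ k, δ k * D k si ai)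
        + ∑ si', p si ai si' * u si')
    (hδ : ∀ k, 0 ≤ δ k)
    (y : S → A → ℝ) (hy0 : ∀ si ai, 0 ≤ y si ai)
    (hy1 : ∑ si, ∑ ai, y si ai = 1)
    (hyb : ∀ si', ∑ si, ∑ ai,
      ((if si = si' then (1 : ℝ) else 0) - p si ai si') * y si ai = 0)
    (hyd : ∀ k, ∑ si, ∑ ai, y si ai * D k si ai ≤ ξ k) :
    v ≤ (∑ si, ∑ ai, y si ai * C si ai) + ∑ k, δ k * ξ k := by
  have H : ∑ si, ∑ ai, y si ai * (v + u si)
      ≤ ∑ si, ∑ ai, y si ai * (C si ai + (∑ k, δ k * D k si ai)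
          + ∑ si', p si ai si' * u si') := by
    refine Finset.sum_le_sum fun si _ => Finset.sum_le_sum fun ai _ => ?_
    exact mul_le_mul_of_nonneg_left (h1 si ai) (hy0 si ai)
  set T : ℝ := ∑ si, (∑ ai, y si ai) * u si with hT
  have hL : ∑ si, ∑ ai, y si ai * (v + u si) = v + T := by
    have h' : ∀ si, ∑ ai, y si ai * (v + u si)
        = (∑ ai, y si ai) * v + (∑ ai, y si ai) * u si := by
      intro si; simp [mul_add, Finset.sum_add_distrib, Finset.sum_mul]
    rw [Finset.sum_congr rfl fun si _ => h' si, Finset.sum_add_distrib,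
      ← Finset.sum_mul, hy1, one_mul]
  have hbal : ∀ si', ∑ si, ∑ ai, p si ai si' * y si ai = ∑ ai, y si' ai := by
    intro si'
    have h := hyb si'
    have heq : ∑ si, ∑ ai, ((if si = si' then (1 : ℝ) else 0) - p si ai si') * y si ai
        = (∑ si, ∑ ai, (if si = si' then (1 : ℝ) else 0) * y si ai)
          - ∑ si, ∑ ai, p si ai si' * y si ai := by
      simp [sub_mul, Finset.sum_sub_distrib]
    rw [heq] at h
    have h2 : ∑ si, ∑ ai, (if si = si' then (1 : ℝ) else 0) * y si ai
        = ∑ ai, y si' ai := by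
      simp [ite_mul, Finset.sum_ite_eq]
    rw [h2] at h; linarith
  have hthird : ∑ si, ∑ ai, y si ai * ∑ si', p si ai si' * u si' = T := by
    calc ∑ si, ∑ ai, y si ai * ∑ si', p si ai si' * u si'
        = ∑ si, ∑ ai, ∑ si', p si ai si' * y si ai * u si' := by
          refine Finset.sum_congr rfl fun si _ => Finset.sum_congr rfl fun ai _ => ?_
          rw [Finset.mul_sum]
          exact Finset.sum_congr rfl fun s _ => by ring
      _ = ∑ si', ∑ si, ∑ ai, p si ai si' * y si ai * u si' := by
          rw [show (∑ si, ∑ ai, ∑ si', p si ai si' * y si ai * u si')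
              = ∑ si, ∑ si', ∑ ai, p si ai si' * y si ai * u si' from
            Finset.sum_congr rfl fun si _ => Finset.sum_comm,
            Finset.sum_comm]
      _ = ∑ si', (∑ si, ∑ ai, p si ai si' * y si ai) * u si' := by
          refine Finset.sum_congr rfl fun si' _ => ?_
          rw [Finset.sum_mul]
          exact Finset.sum_congr rfl fun si _ => (Finset.sum_mul _ _ _).symm
      _ = T := Finset.sum_congr rfl fun si' _ => by rw [hbal]
  have hsecond : ∑ si, ∑ ai, y si ai * ∑ k, δ k * D k si ai ≤ ∑ k, δ k * ξ k := by
    have e : ∑ si, ∑ ai, y si ai * ∑ k, δ k * D k si ai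
        = ∑ k, δ k * ∑ si, ∑ ai, y si ai * D k si ai := by
      calc ∑ si, ∑ ai, y si ai * ∑ k, δ k * D k si ai
          = ∑ si, ∑ ai, ∑ k, δ k * (y si ai * D k si ai) := by
            refine Finset.sum_congr rfl fun si _ => Finset.sum_congr rfl fun ai _ => ?_
            rw [Finset.mul_sum]
            exact Finset.sum_congr rfl fun k _ => by ring
        _ = ∑ k, ∑ si, ∑ ai, δ k * (y si ai * D k si ai) := by
            rw [show (∑ si, ∑ ai, ∑ k, δ k * (y si ai * D k si ai))
                = ∑ si, ∑ k, ∑ ai, δ k * (y si ai * D k si ai) from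
              Finset.sum_congr rfl fun si _ => Finset.sum_comm,
              Finset.sum_comm]
        _ = ∑ k, δ k * ∑ si, ∑ ai, y si ai * D k si ai := by
            refine Finset.sum_congr rfl fun k _ => ?_
            rw [Finset.mul_sum]
            exact Finset.sum_congr rfl fun si _ => (Finset.mul_sum _ _ _).symm
    rw [e]
    exact Finset.sum_le_sum fun k _ =>
      mul_le_mul_of_nonneg_left (hyd k) (hδ k)
  have hR : ∑ si, ∑ ai, y si ai * (C si ai + (∑ k, δ k * D k si ai)
        + ∑ si', p si ai si' * u si')
      = (∑ si, ∑ ai, y si ai * C si ai)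
        + (∑ si, ∑ ai, y si ai * ∑ k, δ k * D k si ai)
        + ∑ si, ∑ ai, y si ai * ∑ si', p si ai si' * u si' := by
    simp [mul_add, Finset.sum_add_distrib]
  rw [hL, hR, hthird] at H
  linarith

theorem MP3_zero_objective_best_response
    (N : ℕ) (hN : 1 ≤ N)
    (S A : Fin N → Type)
    [∀ i, Fintype (S i)] [∀ i, DecidableEq (S i)] [∀ i, Nonempty (S i)]
    [∀ i, Fintype (A i)] [∀ i, DecidableEq (A i)] [∀ i, Nonempty (A i)]
    (n : Fin N → ℕ)
    (p : ∀ i, S i → A i → S i → ℝ)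
    (hp0 : ∀ i si ai si', 0 ≤ p i si ai si')
    (hp1 : ∀ i si ai, ∑ si', p i si ai si' = 1)
    (c : Fin N → (∀ j, S j) → (∀ j, A j) → ℝ)
    (d : ∀ i : Fin N, Fin (n i) → (∀ j, S j) → (∀ j, A j) → ℝ)
    (ξ : ∀ i : Fin N, Fin (n i) → ℝ)
    (v : Fin N → ℝ) (u : ∀ i, S i → ℝ)
    (x : ∀ i, S i → A i → ℝ) (δ : ∀ i : Fin N, Fin (n i) → ℝ)
    (h1 : ∀ i (si : S i) (ai : A i),
      v i + u i si ≤
        (∑ s : ∀ j, S j, ∑ a : ∀ j, A j,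
          if s i = si ∧ a i = ai then
            (∏ j ∈ Finset.univ.erase i, x j (s j) (a j)) * c i s a
          else 0)
        + (∑ k, δ i k * ∑ s : ∀ j, S j, ∑ a : ∀ j, A j,
            if s i = si ∧ a i = ai then
              (∏ j ∈ Finset.univ.erase i, x j (s j) (a j)) * d i k s a
            else 0)
        + ∑ si', p i si ai si' * u i si')
    (h2 : ∀ i (si' : S i), ∑ si : S i, ∑ ai : A i,
      ((if si = si' then (1 : ℝ) else 0) - p i si ai si') * x i si ai = 0)
    (h3 : ∀ i, ∑ si : S i, ∑ ai : A i, x i si ai = 1)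
    (h4 : ∀ i k, ∑ s : ∀ j, S j, ∑ a : ∀ j, A j,
        (∏ j, x j (s j) (a j)) * d i k s a ≤ ξ i k)
    (h5 : ∀ i si ai, 0 ≤ x i si ai)
    (h6 : ∀ i k, 0 ≤ δ i k)
    (hψ : ∑ i, ((∑ s : ∀ j, S j, ∑ a : ∀ j, A j,
          (∏ j, x j (s j) (a j)) * c i s a)
        - v i + ∑ k, δ i k * ξ i k) = 0) :
    ∀ i (y : S i → A i → ℝ),
      (∀ si ai, 0 ≤ y si ai) →
      (∑ si : S i, ∑ ai : A i, y si ai = 1) →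
      (∀ si' : S i, ∑ si : S i, ∑ ai : A i,
        ((if si = si' then (1 : ℝ) else 0) - p i si ai si') * y si ai = 0) →
      (∀ k, ∑ s : ∀ j, S j, ∑ a : ∀ j, A j,
        y (s i) (a i) * (∏ j ∈ Finset.univ.erase i, x j (s j) (a j))
          * d i k s a ≤ ξ i k) →
      (∑ s : ∀ j, S j, ∑ a : ∀ j, A j, (∏ j, x j (s j) (a j)) * c i s a)
        ≤ ∑ s : ∀ j, S j, ∑ a : ∀ j, A j,
            y (s i) (a i) * (∏ j ∈ Finset.univ.erase i, x j (s j) (a j))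
              * c i s a := by
  -- abbreviations for the marginalized cost/constraint functions
  intro i y hy0 hy1 hyb hyd
  set C : S i → A i → ℝ := fun si ai =>
    ∑ s : ∀ j, S j, ∑ a : ∀ j, A j,
      if s i = si ∧ a i = ai then
        (∏ j ∈ Finset.univ.erase i, x j (s j) (a j)) * c i s a
      else 0 with hC
  set D : Fin (n i) → S i → A i → ℝ := fun k si ai =>
    ∑ s : ∀ j, S j, ∑ a : ∀ j, A j,
      if s i = si ∧ a i = ai then
        (∏ j ∈ Finset.univ.erase i, x j (s j) (a j)) * d i k s a
      else 0 with hD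
  -- full product decomposition
  have hprod : ∀ (s : ∀ j, S j) (a : ∀ j, A j),
      (∏ j, x j (s j) (a j))
      = x i (s i) (a i) * ∏ j ∈ Finset.univ.erase i, x j (s j) (a j) :=
    fun s a => (Finset.mul_prod_erase Finset.univ _ (Finset.mem_univ i)).symm
  -- marginalization identities
  have hfc : ∀ (z : S i → A i → ℝ) (g : (∀ j, S j) → (∀ j, A j) → ℝ),
      ∑ s : ∀ j, S j, ∑ a : ∀ j, A j,
        z (s i) (a i) * ((∏ j ∈ Finset.univ.erase i, x j (s j) (a j)) * g s a)
      = ∑ si, ∑ ai, z si ai * ∑ s : ∀ j, S j, ∑ a : ∀ j, A j,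
          (if s i = si ∧ a i = ai then
            (∏ j ∈ Finset.univ.erase i, x j (s j) (a j)) * g s a else 0) :=
    fun z g => sum_factor i z _
  -- feasibility of xⁱ for key_ineq
  have hxd : ∀ k, ∑ si, ∑ ai, x i si ai * D k si ai ≤ ξ i k := by
    intro k
    rw [hD]
    rw [← hfc (x i) (d i k)]
    calc ∑ s : ∀ j, S j, ∑ a : ∀ j, A j,
          x i (s i) (a i) * ((∏ j ∈ Finset.univ.erase i, x j (s j) (a j)) * d i k s a)
        = ∑ s : ∀ j, S j, ∑ a : ∀ j, A j, (∏ j, x j (s j) (a j)) * d i k s a := by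
          refine Finset.sum_congr rfl fun s _ => Finset.sum_congr rfl fun a _ => ?_
          rw [hprod]; ring
      _ ≤ ξ i k := h4 i k
  have hxkey := key_ineq (p i) C D (δ i) (ξ i) (v i) (u i)
    (fun si ai => h1 i si ai) (h6 i) (x i) (h5 i) (h3 i) (h2 i) hxd
  -- ∑ xⁱ C = full expected cost
  have hxC : ∑ si, ∑ ai, x i si ai * C si ai
      = ∑ s : ∀ j, S j, ∑ a : ∀ j, A j, (∏ j, x j (s j) (a j)) * c i s a := by
    rw [hC, ← hfc (x i) (c i)]
    refine Finset.sum_congr rfl fun s _ => Finset.sum_congr rfl fun a _ => ?_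
    rw [hprod]; ring
  -- each ψ-summand is nonnegative, hence zero
  have hterm : ∀ j, (0:ℝ) ≤ (∑ s : ∀ j', S j', ∑ a : ∀ j', A j',
      (∏ j', x j' (s j') (a j')) * c j s a) - v j + ∑ k, δ j k * ξ j k := by
    intro j
    have hxd' : ∀ k, ∑ si, ∑ ai, x j si ai *
        (∑ s : ∀ j', S j', ∑ a : ∀ j', A j',
          if s j = si ∧ a j = ai then
            (∏ j' ∈ Finset.univ.erase j, x j' (s j') (a j')) * d j k s a
          else 0) ≤ ξ j k := by
      intro k
      rw [← sum_factor j (x j) _]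
      calc ∑ s : ∀ j', S j', ∑ a : ∀ j', A j',
            x j (s j) (a j) * ((∏ j' ∈ Finset.univ.erase j, x j' (s j') (a j')) * d j k s a)
          = ∑ s : ∀ j', S j', ∑ a : ∀ j', A j',
              (∏ j', x j' (s j') (a j')) * d j k s a := by
            refine Finset.sum_congr rfl fun s _ => Finset.sum_congr rfl fun a _ => ?_
            rw [(Finset.mul_prod_erase Finset.univ _ (Finset.mem_univ j)).symm]; ring
        _ ≤ ξ j k := h4 j k
    have hk := key_ineq (p j)
      (fun si ai => ∑ s : ∀ j', S j', ∑ a : ∀ j', A j',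
        if s j = si ∧ a j = ai then
          (∏ j' ∈ Finset.univ.erase j, x j' (s j') (a j')) * c j s a else 0)
      (fun k si ai => ∑ s : ∀ j', S j', ∑ a : ∀ j', A j',
        if s j = si ∧ a j = ai then
          (∏ j' ∈ Finset.univ.erase j, x j' (s j') (a j')) * d j k s a else 0)
      (δ j) (ξ j) (v j) (u j) (fun si ai => h1 j si ai) (h6 j)
      (x j) (h5 j) (h3 j) (h2 j) hxd'
    have hxC' : ∑ si, ∑ ai, x j si ai *
        (∑ s : ∀ j', S j', ∑ a : ∀ j', A j',
          if s j = si ∧ a j = ai then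
            (∏ j' ∈ Finset.univ.erase j, x j' (s j') (a j')) * c j s a else 0)
        = ∑ s : ∀ j', S j', ∑ a : ∀ j', A j',
            (∏ j', x j' (s j') (a j')) * c j s a := by
      rw [← sum_factor j (x j) _]
      refine Finset.sum_congr rfl fun s _ => Finset.sum_congr rfl fun a _ => ?_
      rw [(Finset.mul_prod_erase Finset.univ _ (Finset.mem_univ j)).symm]; ring
    rw [hxC'] at hk
    linarith
  have hzero : (∑ s : ∀ j, S j, ∑ a : ∀ j, A j,
      (∏ j, x j (s j) (a j)) * c i s a) - v i + ∑ k, δ i k * ξ i k = 0 :=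
    (Finset.sum_eq_zero_iff_of_nonneg (fun j _ => hterm j)).mp hψ i (Finset.mem_univ i)
  -- feasibility of y for key_ineq
  have hyd' : ∀ k, ∑ si, ∑ ai, y si ai * D k si ai ≤ ξ i k := by
    intro k
    rw [hD, ← hfc y (d i k)]
    calc ∑ s : ∀ j, S j, ∑ a : ∀ j, A j,
          y (s i) (a i) * ((∏ j ∈ Finset.univ.erase i, x j (s j) (a j)) * d i k s a)
        = ∑ s : ∀ j, S j, ∑ a : ∀ j, A j,
            y (s i) (a i) * (∏ j ∈ Finset.univ.erase i, x j (s j) (a j)) * d i k s a := by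
          refine Finset.sum_congr rfl fun s _ => Finset.sum_congr rfl fun a _ => ?_
          ring
      _ ≤ ξ i k := hyd k
  have hykey := key_ineq (p i) C D (δ i) (ξ i) (v i) (u i)
    (fun si ai => h1 i si ai) (h6 i) y hy0 hy1 hyb hyd'
  have hyC : ∑ si, ∑ ai, y si ai * C si ai
      = ∑ s : ∀ j, S j, ∑ a : ∀ j, A j,
          y (s i) (a i) * (∏ j ∈ Finset.univ.erase i, x j (s j) (a j)) * c i s a := by
    rw [hC, ← hfc y (c i)]
    refine Finset.sum_congr rfl fun s _ => Finset.sum_congr rfl fun a _ => ?_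
    ring
  rw [hyC] at hykey
  linarith
end

section
/- Let S, A be finite nonempty sets, β ∈ [0,1), γ a probability distribution on S, p a transition kernel on S × A, and g : S → (A → ℝ) a stationary strategy. Let P(g) be the induced stochastic matrix P(g)(s,s') = ∑_a g(s,a)·p(s'|s,a), and define the discounted occupation measure x(s,a) = (1−β)·(∑_{t=0}^∞ β^t · ∑_{s'} γ(s')·(P(g)^t)(s',s))·g(s,a). Then x ≥ 0 and x satisfies the discounted balance equations ∑_{(s,a)} (δ(s,s') − β·p(s'|s,a))·x(s,a) = (1−β)·γ(s') for all s' ∈ S (hence also ∑_{(s,a)} x(s,a) = 1). -/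
theorem discounted_occupation_measure_in_Qbeta
    (S A : Type) [Fintype S] [DecidableEq S] [Fintype A] [Nonempty S] [Nonempty A]
    (β : ℝ) (hβ0 : 0 ≤ β) (hβ1 : β < 1)
    (γ : S → ℝ) (hγ0 : ∀ s, 0 ≤ γ s) (hγ1 : ∑ s, γ s = 1)
    (p : S → A → S → ℝ)
    (hp0 : ∀ s a s', 0 ≤ p s a s')
    (hp1 : ∀ s a, ∑ s', p s a s' = 1)
    (g : S → A → ℝ) (hg0 : ∀ s a, 0 ≤ g s a) (hg1 : ∀ s, ∑ a, g s a = 1)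
    (P : Matrix S S ℝ) (hP : ∀ s s', P s s' = ∑ a, g s a * p s a s')
    (x : S → A → ℝ)
    (hxdef : ∀ s a, x s a
      = (1 - β) * (∑' t : ℕ, β ^ t * ∑ s', γ s' * (P ^ t) s' s) * g s a) :
    (∀ s a, 0 ≤ x s a) ∧
      (∀ s', ∑ s, ∑ a,
        ((if s = s' then (1 : ℝ) else 0) - β * p s a s') * x s a
          = (1 - β) * γ s') ∧
      (∑ s, ∑ a, x s a = 1) := by
  -- entrywise nonnegativity of matrix powers
  have hPnn0 : ∀ s s', 0 ≤ P s s' := by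
    intro s s'
    rw [hP]
    exact Finset.sum_nonneg fun a _ => mul_nonneg (hg0 s a) (hp0 s a s')
  have hPnn : ∀ t : ℕ, ∀ s s', 0 ≤ (P ^ t) s s' := by
    intro t
    induction t with
    | zero =>
        intro s s'
        simp [Matrix.one_apply]
        split <;> norm_num
    | succ n ih =>
        intro s s'
        rw [pow_succ, Matrix.mul_apply]
        exact Finset.sum_nonneg fun j _ => mul_nonneg (ih s j) (hPnn0 j s')
  -- row sums of powers are one
  have hProw0 : ∀ s, ∑ s', P s s' = 1 := by
    intro s
    simp only [hP]
    rw [Finset.sum_comm]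
    simp only [← Finset.mul_sum, hp1, mul_one, hg1]
  have hProw : ∀ t : ℕ, ∀ s, ∑ s', (P ^ t) s s' = 1 := by
    intro t
    induction t with
    | zero => intro s; simp [Matrix.one_apply]
    | succ n ih =>
        intro s
        simp only [pow_succ, Matrix.mul_apply]
        rw [Finset.sum_comm]
        simp only [← Finset.mul_sum, hProw0, mul_one, ih]
  have hentry_le : ∀ t : ℕ, ∀ s s', (P ^ t) s s' ≤ 1 := by
    intro t s s'
    calc (P ^ t) s s' ≤ ∑ s'', (P ^ t) s s'' :=
          Finset.single_le_sum (fun j _ => hPnn t s j) (Finset.mem_univ s')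
      _ = 1 := hProw t s
  set c : ℕ → S → ℝ := fun t s => β ^ t * ∑ s', γ s' * (P ^ t) s' s with hc
  have hcnn : ∀ t s, 0 ≤ c t s := by
    intro t s
    exact mul_nonneg (pow_nonneg hβ0 t)
      (Finset.sum_nonneg fun s' _ => mul_nonneg (hγ0 s') (hPnn t s' s))
  have hcle : ∀ t s, c t s ≤ β ^ t := by
    intro t s
    have : ∑ s', γ s' * (P ^ t) s' s ≤ ∑ s', γ s' := by
      refine Finset.sum_le_sum fun s' _ => ?_
      calc γ s' * (P ^ t) s' s ≤ γ s' * 1 :=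
            mul_le_mul_of_nonneg_left (hentry_le t s' s) (hγ0 s')
        _ = γ s' := mul_one _
    calc c t s ≤ β ^ t * 1 := by
          rw [hγ1] at this
          exact mul_le_mul_of_nonneg_left this (pow_nonneg hβ0 t)
      _ = β ^ t := mul_one _
  have hcsum : ∀ s, Summable (fun t => c t s) := by
    intro s
    exact Summable.of_nonneg_of_le (fun t => hcnn t s) (fun t => hcle t s)
      (summable_geometric_of_lt_one hβ0 hβ1)
  set y : S → ℝ := fun s => ∑' t, c t s with hy
  have hynn : ∀ s, 0 ≤ y s := fun s => tsum_nonneg fun t => hcnn t s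
  have hxy : ∀ s a, x s a = (1 - β) * y s * g s a := hxdef
  have h1β : (0:ℝ) < 1 - β := by linarith
  -- key recursion: y s' - β * ∑ s, y s * P s s' = γ s'
  have hrec : ∀ s', y s' - β * ∑ s, y s * P s s' = γ s' := by
    intro s'
    have hswap : ∑ s, y s * P s s' = ∑' t, ∑ s, c t s * P s s' := by
      have h1 : ∀ s, y s * P s s' = ∑' t, c t s * P s s' := fun s => (tsum_mul_right).symm
      rw [Finset.sum_congr rfl fun s _ => h1 s]
      exact (Summable.tsum_finsetSum (fun s _ => (hcsum s).mul_right (P s s'))).symm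
    have hstep : ∀ t, β * ∑ s, c t s * P s s' = c (t + 1) s' := by
      intro t
      simp only [hc]
      have hmul : ∀ σ, (P ^ (t + 1)) σ s' = ∑ s, (P ^ t) σ s * P s s' := fun σ => by
        rw [pow_succ, Matrix.mul_apply]
      simp only [hmul, Finset.sum_mul, Finset.mul_sum]
      rw [Finset.sum_comm]
      exact Finset.sum_congr rfl fun σ _ => Finset.sum_congr rfl fun s _ => by ring
    have hshift : β * ∑ s, y s * P s s' = ∑' t, c (t + 1) s' := by
      rw [hswap, ← tsum_mul_left]
      exact tsum_congr hstep
    rw [hshift]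
    have hzero : c 0 s' = γ s' := by
      simp [hc, Matrix.one_apply]
    have hsplit := Summable.tsum_eq_zero_add (hcsum s')
    simp only [hy]
    rw [hsplit, hzero]
    ring
  have hbal : ∀ s', ∑ s, ∑ a,
      ((if s = s' then (1 : ℝ) else 0) - β * p s a s') * x s a = (1 - β) * γ s' := by
    intro s'
    have hinner : ∀ s, ∑ a, ((if s = s' then (1 : ℝ) else 0) - β * p s a s') * x s a
        = (1 - β) * y s * ((if s = s' then (1 : ℝ) else 0) - β * P s s') := by
      intro s
      have h2 : ∀ a, ((if s = s' then (1:ℝ) else 0) - β * p s a s') * ((1 - β) * y s * g s a)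
          = (if s = s' then (1:ℝ) else 0) * ((1 - β) * y s) * g s a
            - (1 - β) * y s * β * (g s a * p s a s') := fun a => by ring
      simp only [hxy]
      rw [Finset.sum_congr rfl fun a _ => h2 a, Finset.sum_sub_distrib,
        ← Finset.mul_sum, ← Finset.mul_sum, hg1, mul_one, ← hP]
      ring
    rw [Finset.sum_congr rfl fun s _ => hinner s]
    have h3 : ∀ s, (1 - β) * y s * ((if s = s' then (1:ℝ) else 0) - β * P s s')
        = (if s = s' then (1:ℝ) else 0) * ((1 - β) * y s) - (1 - β) * β * (y s * P s s') :=
      fun s => by ring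
    rw [Finset.sum_congr rfl fun s _ => h3 s, Finset.sum_sub_distrib, ← Finset.mul_sum]
    simp only [ite_mul, one_mul, zero_mul]
    rw [Finset.sum_ite_eq' Finset.univ s' (fun s => (1 - β) * y s)]
    simp only [Finset.mem_univ, if_true]
    rw [← hrec s']
    ring
  refine ⟨?_, hbal, ?_⟩
  · intro s a
    rw [hxy]
    exact mul_nonneg (mul_nonneg (le_of_lt h1β) (hynn s)) (hg0 s a)
  · have htot : ∑ s', ∑ s, ∑ a,
        ((if s = s' then (1 : ℝ) else 0) - β * p s a s') * x s a = (1 - β) := by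
      rw [Finset.sum_congr rfl fun s' _ => hbal s', ← Finset.mul_sum, hγ1, mul_one]
    have hlhs : ∑ s', ∑ s, ∑ a,
        ((if s = s' then (1 : ℝ) else 0) - β * p s a s') * x s a
        = (1 - β) * ∑ s, ∑ a, x s a := by
      rw [Finset.sum_comm, Finset.mul_sum]
      refine Finset.sum_congr rfl fun s _ => ?_
      rw [Finset.sum_comm, Finset.mul_sum]
      refine Finset.sum_congr rfl fun a _ => ?_
      rw [← Finset.sum_mul, Finset.sum_sub_distrib]
      simp [← Finset.mul_sum, hp1]
    rw [hlhs] at htot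
    have := mul_left_cancel₀ (ne_of_gt h1β) (htot.trans (mul_one (1 - β)).symm)
    exact this
end

section
/- Let S, A¹, A² be finite nonempty sets, C : S × A¹ × A² → ℝ, p : S × A² → (S → ℝ) a transition kernel, and consider the unconstrained zero-sum single-controller case of [MP1]: C¹ = C, C² = −C, n₁ = n₂ = 0. Then for any feasible point (v, u, z, f, x) of the resulting program — i.e., v + u(s) ≤ −∑_{a¹} f(s,a¹)·C(s,a¹,a²) + ∑_{s'} p(s'|s,a²)·u(s') for all (s,a²); z(s) ≤ ∑_{a²} C(s,a¹,a²)·x(s,a²) for all (s,a¹); x an average occupation measure; f row-stochastic and nonnegative — the objective value equals (fᵀCx − ∑_s z(s)) + (−fᵀCx − v) = −∑_s z(s) − v, and this quantity is nonnegative; moreover it equals zero if and only if fᵀCx = ∑_s z(s) and fᵀCx = −v simultaneously, where fᵀCx := ∑_{(s,a¹,a²)} f(s,a¹)·C(s,a¹,a²)·x(s,a²). -/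
theorem MP1_zero_sum_unconstrained
    (S A1 A2 : Type) [Fintype S] [DecidableEq S] [Fintype A1] [Fintype A2]
    [Nonempty S] [Nonempty A1] [Nonempty A2]
    (C : S → A1 → A2 → ℝ)
    (p : S → A2 → S → ℝ)
    (hp0 : ∀ s a s', 0 ≤ p s a s')
    (hp1 : ∀ s a, ∑ s', p s a s' = 1)
    (v : ℝ) (u z : S → ℝ) (f : S → A1 → ℝ) (x : S → A2 → ℝ)
    (h1 : ∀ s a2, v + u s ≤ -(∑ a1, f s a1 * C s a1 a2)
        + ∑ s', p s a2 s' * u s')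
    (h2 : ∀ s a1, z s ≤ ∑ a2, C s a1 a2 * x s a2)
    (h3 : ∀ s', ∑ s, ∑ a2,
      ((if s = s' then (1 : ℝ) else 0) - p s a2 s') * x s a2 = 0)
    (h4 : ∑ s, ∑ a2, x s a2 = 1)
    (h5 : ∀ s a2, 0 ≤ x s a2)
    (h6 : ∀ s, ∑ a1, f s a1 = 1)
    (h7 : ∀ s a1, 0 ≤ f s a1) :
    (((∑ s, ∑ a1, ∑ a2, f s a1 * C s a1 a2 * x s a2) - ∑ s, z s)
        + (-(∑ s, ∑ a1, ∑ a2, f s a1 * C s a1 a2 * x s a2) - v)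
      = -(∑ s, z s) - v)
    ∧ 0 ≤ -(∑ s, z s) - v
    ∧ (-(∑ s, z s) - v = 0 ↔
        ((∑ s, ∑ a1, ∑ a2, f s a1 * C s a1 a2 * x s a2) = ∑ s, z s
          ∧ (∑ s, ∑ a1, ∑ a2, f s a1 * C s a1 a2 * x s a2) = -v)) := by
  set F := ∑ s, ∑ a1, ∑ a2, f s a1 * C s a1 a2 * x s a2 with hF
  -- key1 : ∑ z ≤ F
  have key1 : ∑ s, z s ≤ F := by
    rw [hF]
    apply Finset.sum_le_sum
    intro s _
    calc z s = ∑ a1, f s a1 * z s := by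
          rw [← Finset.sum_mul, h6 s, one_mul]
      _ ≤ ∑ a1, f s a1 * (∑ a2, C s a1 a2 * x s a2) :=
          Finset.sum_le_sum fun a1 _ =>
            mul_le_mul_of_nonneg_left (h2 s a1) (h7 s a1)
      _ = ∑ a1, ∑ a2, f s a1 * C s a1 a2 * x s a2 := by
          simp [Finset.mul_sum, mul_assoc]
  -- flow condition
  have hflow : ∀ s', ∑ a2, x s' a2 = ∑ s, ∑ a2, p s a2 s' * x s a2 := by
    intro s'
    have h := h3 s'
    have h' : (∑ s, ∑ a2, (if s = s' then (1:ℝ) else 0) * x s a2)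
        - ∑ s, ∑ a2, p s a2 s' * x s a2 = 0 := by
      rw [← Finset.sum_sub_distrib]
      simpa [sub_mul, Finset.sum_sub_distrib] using h
    have hδ : (∑ s, ∑ a2, (if s = s' then (1:ℝ) else 0) * x s a2)
        = ∑ a2, x s' a2 := by
      have : ∀ s, (∑ a2, (if s = s' then (1:ℝ) else 0) * x s a2)
          = if s = s' then ∑ a2, x s a2 else 0 := by
        intro s; split <;> simp
      simp [this]
    linarith
  -- key2 : F ≤ -v
  have key2 : F ≤ -v := by
    have hsum : ∑ s, ∑ a2, x s a2 * (v + u s)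
        ≤ ∑ s, ∑ a2, x s a2 * (-(∑ a1, f s a1 * C s a1 a2)
            + ∑ s', p s a2 s' * u s') :=
      Finset.sum_le_sum fun s _ => Finset.sum_le_sum fun a2 _ =>
        mul_le_mul_of_nonneg_left (h1 s a2) (h5 s a2)
    have hL : ∑ s, ∑ a2, x s a2 * (v + u s)
        = v + ∑ s, (∑ a2, x s a2) * u s := by
      have : ∀ s, ∑ a2, x s a2 * (v + u s)
          = (∑ a2, x s a2) * v + (∑ a2, x s a2) * u s := by
        intro s; rw [Finset.sum_mul, Finset.sum_mul, ← Finset.sum_add_distrib]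
        apply Finset.sum_congr rfl; intro a2 _; ring
      rw [Finset.sum_congr rfl fun s _ => this s, Finset.sum_add_distrib,
        ← Finset.sum_mul]
      have h4' : ∑ s, ∑ a2, x s a2 = 1 := h4
      rw [h4', one_mul]
    have hR : ∑ s, ∑ a2, x s a2 * (-(∑ a1, f s a1 * C s a1 a2)
            + ∑ s', p s a2 s' * u s')
        = -F + ∑ s, (∑ a2, x s a2) * u s := by
      have step : ∀ s, ∑ a2, x s a2 * (-(∑ a1, f s a1 * C s a1 a2)
            + ∑ s', p s a2 s' * u s')
          = -(∑ a1, ∑ a2, f s a1 * C s a1 a2 * x s a2)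
            + ∑ a2, ∑ s', x s a2 * (p s a2 s' * u s') := by
        intro s
        simp only [mul_add]
        rw [Finset.sum_add_distrib]
        congr 1
        · rw [← Finset.sum_neg_distrib]
          calc ∑ a2, x s a2 * -∑ a1, f s a1 * C s a1 a2
              = ∑ a2, ∑ a1, -(f s a1 * C s a1 a2 * x s a2) := by
                apply Finset.sum_congr rfl; intro a2 _
                rw [mul_neg, Finset.mul_sum, ← Finset.sum_neg_distrib]
                apply Finset.sum_congr rfl; intro a1 _; ring
            _ = ∑ a1, ∑ a2, -(f s a1 * C s a1 a2 * x s a2) := Finset.sum_comm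
            _ = ∑ a1, -∑ a2, f s a1 * C s a1 a2 * x s a2 := by
                simp [Finset.sum_neg_distrib]
        · apply Finset.sum_congr rfl; intro a2 _
          rw [Finset.mul_sum]
      rw [Finset.sum_congr rfl fun s _ => step s, Finset.sum_add_distrib]
      congr 1
      · rw [← Finset.sum_neg_distrib]
      · -- ∑ s ∑ a2 ∑ s', x * (p * u) = ∑ s', (∑ a2, x s' a2) * u s'
        calc ∑ s, ∑ a2, ∑ s', x s a2 * (p s a2 s' * u s')
            = ∑ s, ∑ s', ∑ a2, x s a2 * (p s a2 s' * u s') := by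
              apply Finset.sum_congr rfl; intro s _; exact Finset.sum_comm
          _ = ∑ s', ∑ s, ∑ a2, x s a2 * (p s a2 s' * u s') := Finset.sum_comm
          _ = ∑ s', (∑ s, ∑ a2, p s a2 s' * x s a2) * u s' := by
              apply Finset.sum_congr rfl; intro s' _
              rw [Finset.sum_mul]
              apply Finset.sum_congr rfl; intro s _
              rw [Finset.sum_mul]
              apply Finset.sum_congr rfl; intro a2 _; ring
          _ = ∑ s', (∑ a2, x s' a2) * u s' := by
              apply Finset.sum_congr rfl; intro s' _
              rw [← hflow s']
    rw [hL, hR] at hsum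
    linarith
  refine ⟨by ring, by linarith, ?_⟩
  constructor
  · intro h; constructor <;> linarith
  · intro ⟨ha, hb⟩; linarith
end

section
/- Let S, A be finite nonempty sets, β ∈ [0,1), γ a probability distribution on S, and p a transition kernel on S × A. Then the set Q^β(γ) = { x : S × A → ℝ : x ≥ 0 and ∑_{(s,a)} (δ(s,s') − β·p(s'|s,a))·x(s,a) = (1−β)·γ(s') for all s' } is a nonempty, compact, convex subset of ℝ^{S×A}, contained in the probability simplex on S × A. -/
/-!
For a stationary policy `σ : S → A` with transition matrix `P s s' = p s (σ s) s'`, the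
discounted occupation measure puts mass `v s` on `(s, σ s)`, where
`v = (1 - β) γᵀ (1 - βP)⁻¹ = (1 - β) ∑ₖ βᵏ γᵀ Pᵏ`; the Neumann series converges because the
`ℓ^∞`-operator norm of a row-stochastic matrix is at most `1`, and its terms are nonnegative, so
`Q^β(γ)` is nonempty. Summing the balance equations over `s'` shows `∑ x = 1` on `Q^β(γ)`, so it
is a closed subset of the cube `[0, 1]^{S × A}`, cut out by the nonnegativity cone and an affine
subspace, hence compact and convex.
-/

open Finset Matrix

namespace Matrix

variable {n : Type*} [Fintype n] [DecidableEq n]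

attribute [local instance] Matrix.linftyOpNormedRing Matrix.linftyOpNormedAlgebra

theorem linfty_opNorm_le_one_of_mem_rowStochastic {M : Matrix n n ℝ}
    (hM : M ∈ rowStochastic ℝ n) : ‖M‖ ≤ 1 := by
  rw [← NNReal.coe_one, ← coe_nnnorm, NNReal.coe_le_coe, linfty_opNNNorm_def, Finset.sup_le_iff]
  intro i _
  rw [← NNReal.coe_le_coe]
  push_cast
  simp only [Real.norm_of_nonneg (nonneg_of_mem_rowStochastic hM),
    sum_row_of_mem_rowStochastic hM i, le_refl]

theorem exists_nonneg_mul_one_sub_smul_eq_one {M : Matrix n n ℝ} (hM : M ∈ rowStochastic ℝ n)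
    {β : ℝ} (hβ0 : 0 ≤ β) (hβ1 : β < 1) :
    ∃ N : Matrix n n ℝ, (∀ i j, 0 ≤ N i j) ∧ N * (1 - β • M) = 1 := by
  have hnorm : ‖β • M‖ < 1 := calc
    ‖β • M‖ ≤ ‖β‖ * ‖M‖ := norm_smul_le β M
    _ ≤ β * 1 := by
      rw [Real.norm_of_nonneg hβ0]
      exact mul_le_mul_of_nonneg_left (linfty_opNorm_le_one_of_mem_rowStochastic hM) hβ0
    _ < 1 := by linarith
  refine ⟨∑' k, (β • M) ^ k, fun i j => ?_, geom_series_mul_neg _ hnorm⟩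
  have hsum : HasSum (fun k => ((β • M) ^ k) i j) ((∑' k, (β • M) ^ k) i j) :=
    Pi.hasSum.1 (Pi.hasSum.1 (summable_geometric_of_norm_lt_one hnorm).hasSum i) j
  refine hsum.nonneg fun k => ?_
  rw [smul_pow, smul_apply, smul_eq_mul]
  exact mul_nonneg (pow_nonneg hβ0 k) (nonneg_of_mem_rowStochastic (pow_mem hM k))

theorem exists_nonneg_vecMul_one_sub_smul_eq {M : Matrix n n ℝ} (hM : M ∈ rowStochastic ℝ n)
    {β : ℝ} (hβ0 : 0 ≤ β) (hβ1 : β < 1) {γ : n → ℝ} (hγ : 0 ≤ γ) :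
    ∃ v, 0 ≤ v ∧ v ᵥ* (1 - β • M) = γ := by
  obtain ⟨N, hN, hNM⟩ := exists_nonneg_mul_one_sub_smul_eq_one hM hβ0 hβ1
  exact ⟨γ ᵥ* N, fun j => sum_nonneg fun i _ => mul_nonneg (hγ i) (hN i j),
    by rw [vecMul_vecMul, hNM, vecMul_one]⟩

end Matrix

section Occupation

variable {S A : Type*} [Fintype S] [DecidableEq S] [Fintype A]

def balanceMap (β : ℝ) (p : S → A → S → ℝ) : (S → A → ℝ) →ₗ[ℝ] S → ℝ where
  toFun x s' := ∑ s, ∑ a, ((if s = s' then 1 else 0) - β * p s a s') * x s a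
  map_add' x y := by
    ext s'
    simp only [Pi.add_apply, mul_add, sum_add_distrib]
  map_smul' c x := by
    ext s'
    simp only [Pi.smul_apply, smul_eq_mul, RingHom.id_apply, mul_sum]
    exact sum_congr rfl fun s _ => sum_congr rfl fun a _ => by ring

def occupationPolytope (β : ℝ) (γ : S → ℝ) (p : S → A → S → ℝ) : Set (S → A → ℝ) :=
  Set.Ici 0 ∩ balanceMap β p ⁻¹' {(1 - β) • γ}

theorem mem_occupationPolytope {β : ℝ} {γ : S → ℝ} {p : S → A → S → ℝ} {x : S → A → ℝ} :
    x ∈ occupationPolytope β γ p ↔ (∀ s a, 0 ≤ x s a) ∧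
      ∀ s', ∑ s, ∑ a, ((if s = s' then (1 : ℝ) else 0) - β * p s a s') * x s a
        = (1 - β) * γ s' :=
  and_congr Iff.rfl funext_iff

theorem sum_balanceMap {β : ℝ} {p : S → A → S → ℝ} (hp : ∀ s a, ∑ s', p s a s' = 1)
    (x : S → A → ℝ) : ∑ s', balanceMap β p x s' = (1 - β) * ∑ s, ∑ a, x s a := by
  simp only [balanceMap, LinearMap.coe_mk, AddHom.coe_mk, mul_sum]
  rw [sum_comm]
  refine sum_congr rfl fun s _ => ?_
  rw [sum_comm]
  refine sum_congr rfl fun a _ => ?_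
  rw [← sum_mul, sum_sub_distrib, ← mul_sum, hp, sum_ite_eq, if_pos (mem_univ s), mul_one]

theorem sum_eq_one_of_mem_occupationPolytope {β : ℝ} (hβ : β < 1) {γ : S → ℝ}
    (hγ : ∑ s, γ s = 1) {p : S → A → S → ℝ} (hp : ∀ s a, ∑ s', p s a s' = 1)
    {x : S → A → ℝ} (hx : x ∈ occupationPolytope β γ p) : ∑ s, ∑ a, x s a = 1 := by
  have h := sum_balanceMap (β := β) hp x
  rw [hx.2] at h
  simp only [Pi.smul_apply, smul_eq_mul, ← mul_sum, hγ, mul_one] at h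
  exact (mul_right_eq_self₀.1 h.symm).resolve_right (sub_ne_zero.2 hβ.ne')

theorem balanceMap_single [DecidableEq A] (β : ℝ) (p : S → A → S → ℝ) (σ : S → A) (v : S → ℝ) :
    balanceMap β p (fun s => Pi.single (σ s) (v s)) = v ᵥ* (1 - β • of fun s => p s (σ s)) := by
  ext s'
  simp only [balanceMap, LinearMap.coe_mk, AddHom.coe_mk, vecMul, dotProduct,
    Matrix.sub_apply, one_apply, Matrix.smul_apply, of_apply, smul_eq_mul]
  refine sum_congr rfl fun s _ => ?_
  rw [sum_eq_single_of_mem (σ s) (mem_univ _) fun a _ ha => by rw [Pi.single_eq_of_ne ha, mul_zero]]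
  simp only [Pi.single_eq_same]
  ring

theorem occupationPolytope_nonempty [Nonempty A] {β : ℝ} (hβ0 : 0 ≤ β) (hβ1 : β < 1)
    {γ : S → ℝ} (hγ : 0 ≤ γ) {p : S → A → S → ℝ} (hp0 : ∀ s a s', 0 ≤ p s a s')
    (hp1 : ∀ s a, ∑ s', p s a s' = 1) : (occupationPolytope β γ p).Nonempty := by
  classical
  let σ : S → A := fun _ => Classical.arbitrary A
  have hP : (of fun s => p s (σ s)) ∈ rowStochastic ℝ S :=
    mem_rowStochastic_iff_sum.2 ⟨fun s => hp0 s (σ s), fun s => hp1 s (σ s)⟩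
  obtain ⟨v, hv, hvP⟩ := exists_nonneg_vecMul_one_sub_smul_eq hP hβ0 hβ1 hγ
  refine ⟨fun s => Pi.single (σ s) (((1 - β) • v) s),
    fun s => (Pi.single_nonneg (α := fun _ => ℝ)).2 (mul_nonneg (sub_nonneg.2 hβ1.le) (hv s)), ?_⟩
  rw [Set.mem_preimage, balanceMap_single, smul_vecMul, hvP]
  rfl

theorem isClosed_occupationPolytope (β : ℝ) (γ : S → ℝ) (p : S → A → S → ℝ) :
    IsClosed (occupationPolytope β γ p) :=
  isClosed_Ici.inter (isClosed_singleton.preimage (balanceMap β p).continuous_of_finiteDimensional)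

theorem convex_occupationPolytope (β : ℝ) (γ : S → ℝ) (p : S → A → S → ℝ) :
    Convex ℝ (occupationPolytope β γ p) :=
  (convex_Ici 0).inter ((convex_singleton _).linear_preimage (balanceMap β p))

theorem occupationPolytope_subset_Icc {β : ℝ} (hβ : β < 1) {γ : S → ℝ}
    (hγ : ∑ s, γ s = 1) {p : S → A → S → ℝ} (hp : ∀ s a, ∑ s', p s a s' = 1) :
    occupationPolytope β γ p ⊆ Set.Icc 0 1 := fun x hx => ⟨hx.1, fun s a => calc
  x s a ≤ ∑ a', x s a' := single_le_sum (fun a' _ => hx.1 s a') (mem_univ a)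
  _ ≤ ∑ s', ∑ a', x s' a' :=
    single_le_sum (fun s' _ => sum_nonneg fun a' _ => hx.1 s' a') (mem_univ s)
  _ = 1 := sum_eq_one_of_mem_occupationPolytope hβ hγ hp hx⟩

theorem isCompact_occupationPolytope {β : ℝ} (hβ : β < 1) {γ : S → ℝ}
    (hγ : ∑ s, γ s = 1) {p : S → A → S → ℝ} (hp : ∀ s a, ∑ s', p s a s' = 1) :
    IsCompact (occupationPolytope β γ p) :=
  isCompact_Icc.of_isClosed_subset (isClosed_occupationPolytope β γ p)
    (occupationPolytope_subset_Icc hβ hγ hp)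

end Occupation

theorem Qbeta_nonempty_compact_convex_in_simplex_general
    (S A : Type) [Fintype S] [DecidableEq S] [Fintype A] [Nonempty A]
    (β : ℝ) (hβ0 : 0 ≤ β) (hβ1 : β < 1)
    (γ : S → ℝ) (hγ0 : ∀ s, 0 ≤ γ s) (hγ1 : ∑ s, γ s = 1)
    (p : S → A → S → ℝ)
    (hp0 : ∀ s a s', 0 ≤ p s a s')
    (hp1 : ∀ s a, ∑ s', p s a s' = 1) :
    let Q : Set (S → A → ℝ) := { x | (∀ s a, 0 ≤ x s a) ∧
      ∀ s', ∑ s, ∑ a,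
        ((if s = s' then (1 : ℝ) else 0) - β * p s a s') * x s a
          = (1 - β) * γ s' }
    Q.Nonempty ∧ IsCompact Q ∧ Convex ℝ Q ∧
      ∀ x ∈ Q, (∀ s a, 0 ≤ x s a) ∧ ∑ s, ∑ a, x s a = 1 := by
  intro Q
  have hQ : Q = occupationPolytope β γ p := Set.ext fun _ => mem_occupationPolytope.symm
  rw [hQ]
  exact ⟨occupationPolytope_nonempty hβ0 hβ1 hγ0 hp0 hp1,
    isCompact_occupationPolytope hβ1 hγ1 hp1, convex_occupationPolytope β γ p,
    fun x hx => ⟨hx.1, sum_eq_one_of_mem_occupationPolytope hβ1 hγ1 hp1 hx⟩⟩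

theorem Qbeta_nonempty_compact_convex_in_simplex
    (S A : Type) [Fintype S] [DecidableEq S] [Fintype A] [Nonempty S] [Nonempty A]
    (β : ℝ) (hβ0 : 0 ≤ β) (hβ1 : β < 1)
    (γ : S → ℝ) (hγ0 : ∀ s, 0 ≤ γ s) (hγ1 : ∑ s, γ s = 1)
    (p : S → A → S → ℝ)
    (hp0 : ∀ s a s', 0 ≤ p s a s')
    (hp1 : ∀ s a, ∑ s', p s a s' = 1) :
    let Q : Set (S → A → ℝ) := { x | (∀ s a, 0 ≤ x s a) ∧
      ∀ s', ∑ s, ∑ a,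
        ((if s = s' then (1 : ℝ) else 0) - β * p s a s') * x s a
          = (1 - β) * γ s' }
    Q.Nonempty ∧ IsCompact Q ∧ Convex ℝ Q ∧
      ∀ x ∈ Q, (∀ s a, 0 ≤ x s a) ∧ ∑ s, ∑ a, x s a = 1 :=
  Qbeta_nonempty_compact_convex_in_simplex_general S A β hβ0 hβ1 γ hγ0 hγ1 p hp0 hp1
end

section
/- Let S¹, S², A¹, A² be finite nonempty sets, and c : S¹ × A¹ × S² × A² → ℝ. For occupation measures x¹ on S¹ × A¹ and x² on S² × A² (each nonnegative, summing to 1), define the bilinear form B(x¹, x²) = ∑ x¹(s¹,a¹)·x²(s²,a²)·c(s¹,a¹,s²,a²). Suppose (v¹, u¹, x¹, v², u², x²) satisfies: v¹ + u¹(s¹) ≤ ∑_{(s²,a²)} c(s¹,a¹,s²,a²)·x²(s²,a²) + ∑_{s̄¹} p¹(s̄¹|s¹,a¹)·u¹(s̄¹) for all (s¹,a¹), and −v² − u²(s²) ≥ ∑_{(s¹,a¹)} c(s¹,a¹,s²,a²)·x¹(s¹,a¹) − ∑_{s̄²} p²(s̄²|s²,a²)·u²(s̄²) restated as v² + u²(s²)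 ≤ −∑_{(s¹,a¹)} c(s¹,a¹,s²,a²)·x¹(s¹,a¹) + ∑_{s̄²} p²(s̄²|s²,a²)·u²(s̄²) for all (s²,a²), where x¹, x² additionally satisfy the average balance equations for transition kernels p¹, p² respectively. Then v¹ ≤ B(x¹,x²) ≤ −v², and hence v¹ + v² ≤ 0 with equality if and only if v¹ = B(x¹,x²) = −v². -/
lemma sum4_swap {α β γ δ M : Type} [Fintype α] [Fintype β] [Fintype γ] [Fintype δ]
    [AddCommMonoid M] (f : α → β → γ → δ → M) :
    ∑ a, ∑ b, ∑ c, ∑ d, f a b c d = ∑ c, ∑ d, ∑ a, ∑ b, f a b c d := by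
  calc ∑ a, ∑ b, ∑ c, ∑ d, f a b c d
      = ∑ a, ∑ c, ∑ b, ∑ d, f a b c d :=
        Finset.sum_congr rfl fun a _ => Finset.sum_comm
    _ = ∑ c, ∑ a, ∑ b, ∑ d, f a b c d := Finset.sum_comm
    _ = ∑ c, ∑ a, ∑ d, ∑ b, f a b c d :=
        Finset.sum_congr rfl fun c _ => Finset.sum_congr rfl fun a _ => Finset.sum_comm
    _ = ∑ c, ∑ d, ∑ a, ∑ b, f a b c d :=
        Finset.sum_congr rfl fun c _ => Finset.sum_comm

lemma key_value_bound (S A : Type) [Fintype S] [DecidableEq S] [Fintype A]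
    (p : S → A → S → ℝ) (x : S → A → ℝ) (hx0 : ∀ s a, 0 ≤ x s a)
    (hx1 : ∑ s, ∑ a, x s a = 1)
    (hbal : ∀ s', ∑ s, ∑ a,
      ((if s = s' then (1 : ℝ) else 0) - p s a s') * x s a = 0)
    (v : ℝ) (u : S → ℝ) (r : S → A → ℝ)
    (h : ∀ s a, v + u s ≤ r s a + ∑ s', p s a s' * u s') :
    v ≤ ∑ s, ∑ a, x s a * r s a := by
  have hbal' : ∀ s', ∑ s, ∑ a, p s a s' * x s a = ∑ a, x s' a := by
    intro s'
    have h0 := hbal s'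
    have : (∑ s, ∑ a, ((if s = s' then (1 : ℝ) else 0) - p s a s') * x s a)
        = (∑ a, x s' a) - ∑ s, ∑ a, p s a s' * x s a := by
      simp only [sub_mul, Finset.sum_sub_distrib, ite_mul, one_mul, zero_mul]
      congr 1
      rw [Finset.sum_comm]
      simp [Finset.sum_ite_eq']
    linarith [this ▸ h0]
  -- sum the hypothesis against x
  have hsum : ∑ s, ∑ a, x s a * (v + u s)
      ≤ ∑ s, ∑ a, x s a * (r s a + ∑ s', p s a s' * u s') := by
    apply Finset.sum_le_sum; intro s _
    apply Finset.sum_le_sum; intro a _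
    exact mul_le_mul_of_nonneg_left (h s a) (hx0 s a)
  have hL : ∑ s, ∑ a, x s a * (v + u s)
      = v + ∑ s, ∑ a, x s a * u s := by
    have hv : ∑ s, ∑ a, x s a * v = v := by
      calc ∑ s, ∑ a, x s a * v = (∑ s, ∑ a, x s a) * v := by
            rw [Finset.sum_mul]
            exact Finset.sum_congr rfl fun s _ => (Finset.sum_mul _ _ _).symm
        _ = v := by rw [hx1, one_mul]
    simp only [mul_add, Finset.sum_add_distrib, hv]
  have hcancel : ∑ s, ∑ a, x s a * ∑ s', p s a s' * u s'
      = ∑ s, ∑ a, x s a * u s := by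
    calc ∑ s, ∑ a, x s a * ∑ s', p s a s' * u s'
        = ∑ s, ∑ a, ∑ s', p s a s' * x s a * u s' := by
          refine Finset.sum_congr rfl fun s _ => Finset.sum_congr rfl fun a _ => ?_
          rw [Finset.mul_sum]
          exact Finset.sum_congr rfl fun s' _ => by ring
      _ = ∑ s', ∑ s, ∑ a, p s a s' * x s a * u s' := by
          calc ∑ s, ∑ a, ∑ s', p s a s' * x s a * u s'
              = ∑ s, ∑ s', ∑ a, p s a s' * x s a * u s' :=
                Finset.sum_congr rfl fun s _ => Finset.sum_comm
            _ = ∑ s', ∑ s, ∑ a, p s a s' * x s a * u s' := Finset.sum_comm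
      _ = ∑ s', (∑ s, ∑ a, p s a s' * x s a) * u s' := by
          refine Finset.sum_congr rfl fun s' _ => ?_
          rw [Finset.sum_mul]
          exact Finset.sum_congr rfl fun s _ => (Finset.sum_mul _ _ _).symm
      _ = ∑ s', (∑ a, x s' a) * u s' := by
          refine Finset.sum_congr rfl fun s' _ => ?_
          rw [hbal']
      _ = ∑ s, ∑ a, x s a * u s := by
          refine Finset.sum_congr rfl fun s _ => (Finset.sum_mul _ _ _)
  have hR : ∑ s, ∑ a, x s a * (r s a + ∑ s', p s a s' * u s')
      = (∑ s, ∑ a, x s a * r s a) + ∑ s, ∑ a, x s a * u s := by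
    simp only [mul_add, Finset.sum_add_distrib]
    rw [hcancel]
  rw [hL, hR] at hsum
  linarith

theorem zero_sum_independent_processes_values
    (S1 S2 A1 A2 : Type)
    [Fintype S1] [DecidableEq S1] [Nonempty S1]
    [Fintype S2] [DecidableEq S2] [Nonempty S2]
    [Fintype A1] [Nonempty A1] [Fintype A2] [Nonempty A2]
    (c : S1 → A1 → S2 → A2 → ℝ)
    (p1 : S1 → A1 → S1 → ℝ)
    (hp10 : ∀ s a s', 0 ≤ p1 s a s')
    (hp11 : ∀ s a, ∑ s', p1 s a s' = 1)
    (p2 : S2 → A2 → S2 → ℝ)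
    (hp20 : ∀ s a s', 0 ≤ p2 s a s')
    (hp21 : ∀ s a, ∑ s', p2 s a s' = 1)
    (x1 : S1 → A1 → ℝ) (hx10 : ∀ s a, 0 ≤ x1 s a)
    (hx11 : ∑ s, ∑ a, x1 s a = 1)
    (hbal1 : ∀ s', ∑ s, ∑ a,
      ((if s = s' then (1 : ℝ) else 0) - p1 s a s') * x1 s a = 0)
    (x2 : S2 → A2 → ℝ) (hx20 : ∀ s a, 0 ≤ x2 s a)
    (hx21 : ∑ s, ∑ a, x2 s a = 1)
    (hbal2 : ∀ s', ∑ s, ∑ a,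
      ((if s = s' then (1 : ℝ) else 0) - p2 s a s') * x2 s a = 0)
    (v1 : ℝ) (u1 : S1 → ℝ) (v2 : ℝ) (u2 : S2 → ℝ)
    (h1 : ∀ s1 a1, v1 + u1 s1 ≤
      (∑ s2, ∑ a2, c s1 a1 s2 a2 * x2 s2 a2) + ∑ s1', p1 s1 a1 s1' * u1 s1')
    (h2 : ∀ s2 a2, v2 + u2 s2 ≤
      -(∑ s1, ∑ a1, c s1 a1 s2 a2 * x1 s1 a1) + ∑ s2', p2 s2 a2 s2' * u2 s2') :
    v1 ≤ (∑ s1, ∑ a1, ∑ s2, ∑ a2, x1 s1 a1 * x2 s2 a2 * c s1 a1 s2 a2)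
    ∧ (∑ s1, ∑ a1, ∑ s2, ∑ a2, x1 s1 a1 * x2 s2 a2 * c s1 a1 s2 a2) ≤ -v2
    ∧ v1 + v2 ≤ 0
    ∧ (v1 + v2 = 0 ↔
        (v1 = (∑ s1, ∑ a1, ∑ s2, ∑ a2, x1 s1 a1 * x2 s2 a2 * c s1 a1 s2 a2)
         ∧ (∑ s1, ∑ a1, ∑ s2, ∑ a2, x1 s1 a1 * x2 s2 a2 * c s1 a1 s2 a2)
            = -v2)) := by
  set B := ∑ s1, ∑ a1, ∑ s2, ∑ a2, x1 s1 a1 * x2 s2 a2 * c s1 a1 s2 a2 with hB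
  have hv1 : v1 ≤ B := by
    have := key_value_bound S1 A1 p1 x1 hx10 hx11 hbal1 v1 u1
      (fun s1 a1 => ∑ s2, ∑ a2, c s1 a1 s2 a2 * x2 s2 a2) h1
    calc v1 ≤ ∑ s1, ∑ a1, x1 s1 a1 * ∑ s2, ∑ a2, c s1 a1 s2 a2 * x2 s2 a2 := this
      _ = B := by
        rw [hB]; congr 1; ext s1; congr 1; ext a1
        rw [Finset.mul_sum]; congr 1; ext s2
        rw [Finset.mul_sum]; congr 1; ext a2; ring
  have hv2 : v2 ≤ -B := by
    have := key_value_bound S2 A2 p2 x2 hx20 hx21 hbal2 v2 u2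
      (fun s2 a2 => -(∑ s1, ∑ a1, c s1 a1 s2 a2 * x1 s1 a1)) h2
    calc v2 ≤ ∑ s2, ∑ a2, x2 s2 a2 * -(∑ s1, ∑ a1, c s1 a1 s2 a2 * x1 s1 a1) := this
      _ = -B := by
        rw [hB, sum4_swap (fun s1 a1 s2 a2 => x1 s1 a1 * x2 s2 a2 * c s1 a1 s2 a2),
          ← Finset.sum_neg_distrib]
        congr 1; ext s2
        rw [← Finset.sum_neg_distrib]
        congr 1; ext a2
        rw [mul_neg]
        congr 1
        rw [Finset.mul_sum]
        congr 1; ext s1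
        rw [Finset.mul_sum]
        congr 1; ext a1
        ring
  refine ⟨hv1, by linarith, by linarith, ?_⟩
  constructor
  · intro h; constructor <;> linarith
  · rintro ⟨ha, hb⟩; linarith
end
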